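/- arXiv:1604.07115 — 12 statements merged into one kernel-verified Lean document; each statement's English description precedes it below -/
import Mathlib

section
/- Let x(t) be a continuously differentiable solution of the macroscopic rate equation dx/dt = F(x) taking values in the positive orthant, and let φ : (0,∞)^N → ℝ be a differentiable function satisfying the Hamilton–Jacobi equation at every point x(t) of the trajectory. Then (d/dt) φ(x(t)) ≤ 0 for all t. -/
open Real Filter Topology

/-- Along any positive, continuously differentiable solution of the
macroscopic rate equation, a differentiable function satisfying the
Hamilton–Jacobi equation at every point of the trajectory is non-increasing. -/
theorem hje_solution_is_lyapunov
    (N M : ℕ) (ν : Fin M → Fin N → ℤ)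
    (Rp Rm : Fin M → (Fin N → ℝ) → ℝ)
    (hRp : ∀ ℓ (y : Fin N → ℝ), (∀ i, 0 < y i) → 0 < Rp ℓ y)
    (hRm : ∀ ℓ (y : Fin N → ℝ), (∀ i, 0 < y i) → 0 < Rm ℓ y)
    (x : ℝ → (Fin N → ℝ))
    (hxpos : ∀ t i, 0 < x t i)
    (hode : ∀ t, HasDerivAt x
      (fun i => ∑ ℓ, (ν ℓ i : ℝ) * (Rp ℓ (x t) - Rm ℓ (x t))) t)
    (φ : (Fin N → ℝ) → ℝ)
    (hφ : ∀ t, DifferentiableAt ℝ φ (x t))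
    (hHJE : ∀ t, ∑ ℓ,
        (Rp ℓ (x t) * (1 - Real.exp (fderiv ℝ φ (x t) (fun i => (ν ℓ i : ℝ)))) +
         Rm ℓ (x t) * (1 - Real.exp (-(fderiv ℝ φ (x t) (fun i => (ν ℓ i : ℝ)))))) = 0)
    (t : ℝ) :
    deriv (fun s => φ (x s)) t ≤ 0 := by
  set L := fderiv ℝ φ (x t) with hL
  set a : Fin M → ℝ := fun ℓ => L (fun i => (ν ℓ i : ℝ)) with ha
  set c : Fin M → ℝ := fun ℓ => Rp ℓ (x t) - Rm ℓ (x t) with hc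
  have hchain : HasDerivAt (fun s => φ (x s)) (L (fun i => ∑ ℓ, (ν ℓ i : ℝ) * c ℓ)) t :=
    (hφ t).hasFDerivAt.comp_hasDerivAt t (hode t)
  rw [hchain.deriv]
  have hvec : (fun i => ∑ ℓ, (ν ℓ i : ℝ) * c ℓ)
      = ∑ ℓ, c ℓ • (fun i => (ν ℓ i : ℝ)) := by
    funext i
    simp [Finset.sum_apply, mul_comm]
  rw [hvec, map_sum]
  have hLsmul : ∀ ℓ : Fin M, L (c ℓ • (fun i => (ν ℓ i : ℝ))) = c ℓ * a ℓ := by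
    intro ℓ; rw [map_smul]; rfl
  simp only [hLsmul]
  have key : ∀ ℓ : Fin M, c ℓ * a ℓ ≤
      -(Rp ℓ (x t) * (1 - Real.exp (a ℓ)) + Rm ℓ (x t) * (1 - Real.exp (-(a ℓ)))) := by
    intro ℓ
    have hp := hRp ℓ (x t) (hxpos t)
    have hm := hRm ℓ (x t) (hxpos t)
    have h1 : a ℓ + 1 ≤ Real.exp (a ℓ) := Real.add_one_le_exp _
    have h2 : -(a ℓ) + 1 ≤ Real.exp (-(a ℓ)) := Real.add_one_le_exp _
    have e1 : Rp ℓ (x t) * a ℓ ≤ Rp ℓ (x t) * (Real.exp (a ℓ) - 1) := by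
      apply mul_le_mul_of_nonneg_left (by linarith) hp.le
    have e2 : Rm ℓ (x t) * (-(a ℓ)) ≤ Rm ℓ (x t) * (Real.exp (-(a ℓ)) - 1) := by
      apply mul_le_mul_of_nonneg_left (by linarith) hm.le
    simp only [hc]
    nlinarith
  calc ∑ ℓ, c ℓ * a ℓ
      ≤ ∑ ℓ, -(Rp ℓ (x t) * (1 - Real.exp (a ℓ)) + Rm ℓ (x t) * (1 - Real.exp (-(a ℓ)))) :=
        Finset.sum_le_sum fun ℓ _ => key ℓ
    _ = 0 := by
        have h := hHJE t
        simp only [Finset.sum_add_distrib, Finset.sum_neg_distrib, ha, hL] at h ⊢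
        linarith
end

section
/- Let x ∈ (0,∞)^N and let φ : (0,∞)^N → ℝ be differentiable and satisfy the Hamilton–Jacobi equation at x. Then Σ_{ℓ=1}^M (R_{+ℓ}(x) − R_{−ℓ}(x)) (ν_ℓ·∇φ(x)) = 0 if and only if ν_ℓ·∇φ(x) = 0 for every ℓ = 1,…,M. In particular, the time derivative of φ along a solution of the rate equation vanishes at x exactly when the gradient of φ vanishes in all stoichiometric directions ν_ℓ. -/
open Real Filter Topology

/-- At a point of the positive orthant where the Hamilton–Jacobi
equation holds, the free energy dissipation `∑ (R₊ - R₋)(ν·∇φ)` vanishes iff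
`ν_ℓ·∇φ(x) = 0` for every reaction `ℓ`. -/
theorem dissipation_zero_iff_gradient_vanishes
    (N M : ℕ) (ν : Fin M → Fin N → ℤ)
    (Rp Rm : Fin M → (Fin N → ℝ) → ℝ)
    (hRp : ∀ ℓ (y : Fin N → ℝ), (∀ i, 0 < y i) → 0 < Rp ℓ y)
    (hRm : ∀ ℓ (y : Fin N → ℝ), (∀ i, 0 < y i) → 0 < Rm ℓ y)
    (x : Fin N → ℝ) (hx : ∀ i, 0 < x i)
    (φ : (Fin N → ℝ) → ℝ)
    (hφ : DifferentiableAt ℝ φ x)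
    (hHJE : ∑ ℓ,
        (Rp ℓ x * (1 - Real.exp (fderiv ℝ φ x (fun i => (ν ℓ i : ℝ)))) +
         Rm ℓ x * (1 - Real.exp (-(fderiv ℝ φ x (fun i => (ν ℓ i : ℝ)))))) = 0) :
    (∑ ℓ, (Rp ℓ x - Rm ℓ x) * fderiv ℝ φ x (fun i => (ν ℓ i : ℝ)) = 0) ↔
      (∀ ℓ, fderiv ℝ φ x (fun i => (ν ℓ i : ℝ)) = 0) := by
  set a : Fin M → ℝ := fun ℓ => fderiv ℝ φ x (fun i => (ν ℓ i : ℝ)) with ha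
  set g : Fin M → ℝ := fun ℓ =>
    Rp ℓ x * (Real.exp (a ℓ) - 1 - a ℓ) + Rm ℓ x * (Real.exp (-a ℓ) - 1 + a ℓ) with hg
  have hg0 : ∀ ℓ, 0 ≤ g ℓ := by
    intro ℓ
    have h1 : 0 ≤ Real.exp (a ℓ) - 1 - a ℓ := by
      have := Real.add_one_le_exp (a ℓ); linarith
    have h2 : 0 ≤ Real.exp (-a ℓ) - 1 + a ℓ := by
      have := Real.add_one_le_exp (-a ℓ); linarith
    have := (hRp ℓ x hx).le
    have := (hRm ℓ x hx).le
    positivity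
  have hsum : ∑ ℓ, g ℓ = -(∑ ℓ, (Rp ℓ x - Rm ℓ x) * a ℓ) := by
    have : ∑ ℓ, g ℓ + ∑ ℓ, (Rp ℓ x - Rm ℓ x) * a ℓ
        = -(∑ ℓ, (Rp ℓ x * (1 - Real.exp (a ℓ)) + Rm ℓ x * (1 - Real.exp (-a ℓ)))) := by
      rw [← Finset.sum_add_distrib, ← Finset.sum_neg_distrib]
      apply Finset.sum_congr rfl
      intro ℓ _
      simp only [hg]
      ring
    rw [hHJE] at this
    linarith
  constructor
  · intro hD ℓ
    have hzero : ∑ ℓ, g ℓ = 0 := by rw [hsum, hD, neg_zero]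
    have hgℓ : g ℓ = 0 :=
      (Finset.sum_eq_zero_iff_of_nonneg (fun i _ => hg0 i)).1 hzero ℓ (Finset.mem_univ ℓ)
    by_contra hne
    have h1 : 0 < Real.exp (a ℓ) - 1 - a ℓ := by
      have := Real.add_one_lt_exp hne; linarith
    have h2 : 0 ≤ Real.exp (-a ℓ) - 1 + a ℓ := by
      have := Real.add_one_le_exp (-a ℓ); linarith
    have := hRp ℓ x hx
    have := (hRm ℓ x hx).le
    simp only [hg] at hgℓ
    linarith [mul_pos (hRp ℓ x hx) h1, mul_nonneg (hRm ℓ x hx).le h2]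
  · intro h
    apply Finset.sum_eq_zero
    intro ℓ _
    rw [h ℓ, mul_zero]
end

section
/- Let x ∈ (0,∞)^N be a steady state of the rate equation, i.e. F_i(x) = Σ_{ℓ=1}^M ν_{ℓi}(R_{+ℓ}(x) − R_{−ℓ}(x)) = 0 for all i = 1,…,N, and let φ : (0,∞)^N → ℝ be differentiable and satisfy the Hamilton–Jacobi equation at x. Then ν_ℓ·∇φ(x) = 0 for every ℓ = 1,…,M. -/
open Real Filter Topology

/-- At a steady state of the rate equation where the
Hamilton–Jacobi equation holds, the gradient of `φ` vanishes in every
stoichiometric direction. -/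
theorem steady_state_gradient_vanishes
    (N M : ℕ) (ν : Fin M → Fin N → ℤ)
    (Rp Rm : Fin M → (Fin N → ℝ) → ℝ)
    (hRp : ∀ ℓ (y : Fin N → ℝ), (∀ i, 0 < y i) → 0 < Rp ℓ y)
    (hRm : ∀ ℓ (y : Fin N → ℝ), (∀ i, 0 < y i) → 0 < Rm ℓ y)
    (x : Fin N → ℝ) (hx : ∀ i, 0 < x i)
    (hss : ∀ i, ∑ ℓ, (ν ℓ i : ℝ) * (Rp ℓ x - Rm ℓ x) = 0)
    (φ : (Fin N → ℝ) → ℝ)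
    (hφ : DifferentiableAt ℝ φ x)
    (hHJE : ∑ ℓ,
        (Rp ℓ x * (1 - Real.exp (fderiv ℝ φ x (fun i => (ν ℓ i : ℝ)))) +
         Rm ℓ x * (1 - Real.exp (-(fderiv ℝ φ x (fun i => (ν ℓ i : ℝ)))))) = 0) :
    ∀ ℓ, fderiv ℝ φ x (fun i => (ν ℓ i : ℝ)) = 0 := by
  set p : (Fin N → ℝ) →L[ℝ] ℝ := fderiv ℝ φ x with hp
  set a : Fin M → ℝ := fun ℓ => p (fun i => (ν ℓ i : ℝ)) with ha
  -- linearity: a ℓ = ∑ i, ν ℓ i * p (Pi.single i 1)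
  have hlin : ∀ ℓ, a ℓ = ∑ i, (ν ℓ i : ℝ) * p (Pi.single i 1) := by
    intro ℓ
    have : (fun i => (ν ℓ i : ℝ)) = ∑ i, (ν ℓ i : ℝ) • (Pi.single i (1:ℝ) : Fin N → ℝ) := by
      funext j
      simp [Finset.sum_apply, Pi.single_apply]
    rw [ha]
    simp only [this, map_sum, map_smul, smul_eq_mul]
  -- ∑ ℓ, a ℓ * (Rp - Rm) = 0
  have hsum0 : ∑ ℓ, a ℓ * (Rp ℓ x - Rm ℓ x) = 0 := by
    calc ∑ ℓ, a ℓ * (Rp ℓ x - Rm ℓ x)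
        = ∑ ℓ, ∑ i, p (Pi.single i 1) * ((ν ℓ i : ℝ) * (Rp ℓ x - Rm ℓ x)) := by
          refine Finset.sum_congr rfl fun ℓ _ => ?_
          rw [hlin ℓ, Finset.sum_mul]
          refine Finset.sum_congr rfl fun i _ => by ring
      _ = ∑ i, p (Pi.single i 1) * ∑ ℓ, ((ν ℓ i : ℝ) * (Rp ℓ x - Rm ℓ x)) := by
          rw [Finset.sum_comm]
          exact Finset.sum_congr rfl fun i _ => (Finset.mul_sum _ _ _).symm
      _ = 0 := by simp [hss]
  -- total sum of per-reaction nonpositive quantities is 0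
  have htot : ∑ ℓ, (Rp ℓ x * (1 - Real.exp (a ℓ)) + Rm ℓ x * (1 - Real.exp (-(a ℓ)))
      + a ℓ * (Rp ℓ x - Rm ℓ x)) = 0 := by
    rw [Finset.sum_add_distrib, hsum0, add_zero]
    exact hHJE
  have hnonpos : ∀ ℓ ∈ Finset.univ, (Rp ℓ x * (1 - Real.exp (a ℓ))
      + Rm ℓ x * (1 - Real.exp (-(a ℓ))) + a ℓ * (Rp ℓ x - Rm ℓ x)) ≤ 0 := by
    intro ℓ _
    have h1 : a ℓ + 1 ≤ Real.exp (a ℓ) := Real.add_one_le_exp _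
    have h2 : (-(a ℓ)) + 1 ≤ Real.exp (-(a ℓ)) := Real.add_one_le_exp _
    have hP := (hRp ℓ x hx).le
    have hM := (hRm ℓ x hx).le
    nlinarith [mul_nonneg hP (sub_nonneg.mpr h1), mul_nonneg hM (sub_nonneg.mpr h2)]
  have heach := (Finset.sum_eq_zero_iff_of_nonpos hnonpos).mp htot
  intro ℓ
  by_contra hne
  have h1 : a ℓ + 1 < Real.exp (a ℓ) := Real.add_one_lt_exp hne
  have h2 : (-(a ℓ)) + 1 < Real.exp (-(a ℓ)) := Real.add_one_lt_exp (neg_ne_zero.mpr hne)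
  have hP := hRp ℓ x hx
  have hM := hRm ℓ x hx
  have := heach ℓ (Finset.mem_univ ℓ)
  nlinarith [mul_pos hP (sub_pos.mpr h1), mul_pos hM (sub_pos.mpr h2)]
end

section
/- Let φ : (0,∞)^N → ℝ be twice continuously differentiable, let the flux functions R_{±ℓ} be continuously differentiable, and suppose φ satisfies the Hamilton–Jacobi equation at every point of a neighborhood of x ∈ (0,∞)^N. Assume ν_ℓ·∇φ(x) = 0 for every ℓ, and assume the Hessian matrix H of φ at x is injective on the linear span of {ν_1, …, ν_M} (i.e. the kernel of H intersects the column space of the stoichiometric matrix only in 0). Then x is a steady state of the rate equation: F_i(x) = Σ_{ℓ=1}^M ν_{ℓi}(R_{+ℓ}(x) − R_{−ℓ}(x)) = 0 for all i. -/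
open Real Filter Topology

/-- If `φ` is C², the fluxes are C¹, the Hamilton–Jacobi equation
holds in a neighborhood of `x`, the gradient of `φ` vanishes in every
stoichiometric direction at `x`, and the Hessian of `φ` at `x` is injective on
the span of the stoichiometric vectors, then `x` is a steady state of the rate
equation. -/
theorem gradient_vanishes_implies_steady_state
    (N M : ℕ) (ν : Fin M → Fin N → ℤ)
    (Rp Rm : Fin M → (Fin N → ℝ) → ℝ)
    (hRp : ∀ ℓ (y : Fin N → ℝ), (∀ i, 0 < y i) → 0 < Rp ℓ y)
    (hRm : ∀ ℓ (y : Fin N → ℝ), (∀ i, 0 < y i) → 0 < Rm ℓ y)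
    (hRpC1 : ∀ ℓ, ContDiff ℝ 1 (Rp ℓ))
    (hRmC1 : ∀ ℓ, ContDiff ℝ 1 (Rm ℓ))
    (x : Fin N → ℝ) (hx : ∀ i, 0 < x i)
    (φ : (Fin N → ℝ) → ℝ)
    (hφ : ContDiff ℝ 2 φ)
    (hHJE : ∀ᶠ y in nhds x, ∑ ℓ,
        (Rp ℓ y * (1 - Real.exp (fderiv ℝ φ y (fun i => (ν ℓ i : ℝ)))) +
         Rm ℓ y * (1 - Real.exp (-(fderiv ℝ φ y (fun i => (ν ℓ i : ℝ)))))) = 0)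
    (hgrad : ∀ ℓ, fderiv ℝ φ x (fun i => (ν ℓ i : ℝ)) = 0)
    (hHess : ∀ v : Fin N → ℝ,
        v ∈ Submodule.span ℝ (Set.range fun ℓ => (fun i => (ν ℓ i : ℝ))) →
        (Matrix.of fun i j =>
          iteratedFDeriv ℝ 2 φ x ![Pi.single i 1, Pi.single j 1]).mulVec v = 0 →
        v = 0) :
    ∀ i, ∑ ℓ, (ν ℓ i : ℝ) * (Rp ℓ x - Rm ℓ x) = 0 := by
  classical
  set νv : Fin M → (Fin N → ℝ) := fun ℓ i => (ν ℓ i : ℝ) with hνv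
  -- second derivative as a bilinear map
  have hφ' : ContDiff ℝ 1 (fderiv ℝ φ) := hφ.fderiv_right (by norm_num)
  have hφ'd : DifferentiableAt ℝ (fderiv ℝ φ) x :=
    (hφ'.differentiable one_ne_zero).differentiableAt
  set B : (Fin N → ℝ) →L[ℝ] (Fin N → ℝ) →L[ℝ] ℝ := fderiv ℝ (fderiv ℝ φ) x with hB
  -- derivative of y ↦ fderiv φ y (νv ℓ)
  have hψ : ∀ ℓ, HasFDerivAt (fun y => fderiv ℝ φ y (νv ℓ)) (B.flip (νv ℓ)) x := by
    intro ℓ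
    have h := hφ'd.hasFDerivAt.clm_apply (hasFDerivAt_const (νv ℓ) x)
    simpa using h
  -- derivative of each summand of the HJE
  have hgℓ : ∀ ℓ, HasFDerivAt
      (fun y => Rp ℓ y * (1 - Real.exp (fderiv ℝ φ y (νv ℓ))) +
        Rm ℓ y * (1 - Real.exp (-(fderiv ℝ φ y (νv ℓ)))))
      ((Rm ℓ x - Rp ℓ x) • B.flip (νv ℓ)) x := by
    intro ℓ
    have hRp' : HasFDerivAt (Rp ℓ) (fderiv ℝ (Rp ℓ) x) x :=
      (((hRpC1 ℓ).differentiable one_ne_zero) x).hasFDerivAt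
    have hRm' : HasFDerivAt (Rm ℓ) (fderiv ℝ (Rm ℓ) x) x :=
      (((hRmC1 ℓ).differentiable one_ne_zero) x).hasFDerivAt
    have h1 : HasFDerivAt (fun y => (1:ℝ) - Real.exp (fderiv ℝ φ y (νv ℓ)))
        (-(B.flip (νv ℓ))) x := by
      have := (hasFDerivAt_const (1:ℝ) x).fun_sub (hψ ℓ).exp
      simpa [hgrad ℓ, hνv] using this
    have h2 : HasFDerivAt (fun y => (1:ℝ) - Real.exp (-(fderiv ℝ φ y (νv ℓ))))
        (B.flip (νv ℓ)) x := by
      have := (hasFDerivAt_const (1:ℝ) x).fun_sub ((hψ ℓ).neg).exp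
      simpa [hgrad ℓ, hνv] using this
    have := (hRp'.mul h1).add (hRm'.mul h2)
    have heq : Rp ℓ x • -(B.flip (νv ℓ)) + (1 - Real.exp (fderiv ℝ φ x (νv ℓ))) • fderiv ℝ (Rp ℓ) x +
        (Rm ℓ x • B.flip (νv ℓ) + (1 - Real.exp (-(fderiv ℝ φ x (νv ℓ)))) • fderiv ℝ (Rm ℓ) x)
        = (Rm ℓ x - Rp ℓ x) • B.flip (νv ℓ) := by
      rw [hgrad ℓ]
      simp [sub_smul, smul_neg]
      abel
    rw [heq] at this
    exact this
  -- the derivative of the (eventually zero) HJE expression vanishes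
  have hG : HasFDerivAt (fun y => ∑ ℓ,
      (Rp ℓ y * (1 - Real.exp (fderiv ℝ φ y (νv ℓ))) +
       Rm ℓ y * (1 - Real.exp (-(fderiv ℝ φ y (νv ℓ))))))
      (∑ ℓ, (Rm ℓ x - Rp ℓ x) • B.flip (νv ℓ)) x :=
    HasFDerivAt.fun_sum fun ℓ _ => hgℓ ℓ
  have hzero : (∑ ℓ, (Rm ℓ x - Rp ℓ x) • B.flip (νv ℓ)) = 0 := by
    have hev : (fun y => ∑ ℓ,
        (Rp ℓ y * (1 - Real.exp (fderiv ℝ φ y (νv ℓ))) +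
         Rm ℓ y * (1 - Real.exp (-(fderiv ℝ φ y (νv ℓ)))))) =ᶠ[nhds x]
        (fun _ => (0:ℝ)) := hHJE
    have := hev.fderiv_eq (𝕜 := ℝ)
    rw [hG.fderiv] at this
    simpa using this
  -- key identity: for every direction u
  have key : ∀ u : Fin N → ℝ, ∑ ℓ, (Rm ℓ x - Rp ℓ x) * B u (νv ℓ) = 0 := by
    intro u
    have h := congrArg (fun L : (Fin N → ℝ) →L[ℝ] ℝ => L u) hzero
    simpa [ContinuousLinearMap.sum_apply, smul_eq_mul] using h
  -- the candidate kernel vector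
  set w : Fin N → ℝ := fun i => ∑ ℓ, (Rp ℓ x - Rm ℓ x) * νv ℓ i with hw
  have hw_span : w ∈ Submodule.span ℝ (Set.range fun ℓ => (fun i => (ν ℓ i : ℝ))) := by
    have hw_eq : w = ∑ ℓ, (Rp ℓ x - Rm ℓ x) • νv ℓ := by
      funext i
      simp [hw, Finset.sum_apply]
    rw [hw_eq]
    exact Submodule.sum_mem _ fun ℓ _ => Submodule.smul_mem _ _
      (Submodule.subset_span ⟨ℓ, rfl⟩)
  -- decompose νv ℓ into standard basis vectors
  have hν_decomp : ∀ ℓ, νv ℓ = ∑ j, νv ℓ j • (Pi.single j 1 : Fin N → ℝ) := by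
    intro ℓ
    funext i
    simp [Finset.sum_apply, Pi.single_apply, mul_ite]
  have hB_decomp : ∀ (u : Fin N → ℝ) ℓ, B u (νv ℓ) = ∑ j, νv ℓ j * B u (Pi.single j 1) := by
    intro u ℓ
    conv_lhs => rw [hν_decomp ℓ]
    rw [map_sum]
    simp [smul_eq_mul]
  -- Hessian kills w
  have hmul : (Matrix.of fun i j =>
      iteratedFDeriv ℝ 2 φ x ![Pi.single i 1, Pi.single j 1]).mulVec w = 0 := by
    funext k
    have hHentry : ∀ i j : Fin N,
        iteratedFDeriv ℝ 2 φ x ![Pi.single i 1, Pi.single j 1]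
          = B (Pi.single i 1) (Pi.single j 1) := by
      intro i j
      rw [iteratedFDeriv_two_apply]
      simp [hB]
    have : (Matrix.of fun i j =>
        iteratedFDeriv ℝ 2 φ x ![Pi.single i 1, Pi.single j 1]).mulVec w k
        = ∑ j, B (Pi.single k 1) (Pi.single j 1) * w j := by
      simp [Matrix.mulVec, dotProduct, hHentry]
    rw [Pi.zero_apply, this]
    have swap : ∑ j, B (Pi.single k 1) (Pi.single j 1) * w j
        = ∑ ℓ, (Rp ℓ x - Rm ℓ x) * B (Pi.single k 1) (νv ℓ) := by
      simp only [hw, Finset.mul_sum]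
      rw [Finset.sum_comm]
      refine Finset.sum_congr rfl fun ℓ _ => ?_
      rw [hB_decomp, Finset.mul_sum]
      refine Finset.sum_congr rfl fun j _ => ?_
      ring
    rw [swap]
    have hk := key (Pi.single k 1)
    have h2 : ∑ ℓ, (Rp ℓ x - Rm ℓ x) * B (Pi.single k 1) (νv ℓ)
        = -∑ ℓ, (Rm ℓ x - Rp ℓ x) * B (Pi.single k 1) (νv ℓ) := by
      rw [← Finset.sum_neg_distrib]
      exact Finset.sum_congr rfl fun ℓ _ => by ring
    rw [h2, hk, neg_zero]
  have hw0 : w = 0 := hHess w hw_span hmul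
  intro i
  have hwi : ∑ ℓ, (Rp ℓ x - Rm ℓ x) * νv ℓ i = 0 := by
    have := congrFun hw0 i
    simpa [hw] using this
  calc ∑ ℓ, (ν ℓ i : ℝ) * (Rp ℓ x - Rm ℓ x)
      = ∑ ℓ, (Rp ℓ x - Rm ℓ x) * νv ℓ i :=
        Finset.sum_congr rfl fun ℓ _ => mul_comm _ _
    _ = 0 := hwi
end

section
/- Let φ : ℝ^N → ℝ be twice continuously differentiable, let x ∈ ℝ^N, let ν ∈ ℤ^N, and let ε̃ : (0,∞) → (0,∞) be a function satisfying V·ε̃(V) ≥ 1/2 for all V and lim_{V→∞} V·ε̃(V)² = 0. Then lim_{V→∞} V · ( inf_{y ∈ B_{ε̃(V)}(x)} φ(y) − inf_{y ∈ B_{ε̃(V)}(x − ν/V)} φ(y) ) = ν · ∇φ(x), where B_r(z) denotes the open ball of radius r centered at z in ℝ^N. -/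
open Real Filter Topology

/-- For a C² function `φ` on ℝ^N, the difference of the infima of
`φ` over the shrinking balls `B_{ε̃(V)}(x)` and `B_{ε̃(V)}(x - ν/V)`, multiplied
by `V`, converges to the directional derivative `ν·∇φ(x)` as `V → ∞`, provided
`V·ε̃(V) ≥ 1/2` and `V·ε̃(V)² → 0`. -/
theorem inf_difference_recovers_directional_derivative
    (N : ℕ) (φ : EuclideanSpace ℝ (Fin N) → ℝ)
    (hφ : ContDiff ℝ 2 φ)
    (x : EuclideanSpace ℝ (Fin N)) (ν : Fin N → ℤ)
    (νv : EuclideanSpace ℝ (Fin N)) (hνv : ∀ i, νv i = (ν i : ℝ))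
    (ε : ℝ → ℝ)
    (hεpos : ∀ V > 0, 0 < ε V)
    (hεlow : ∀ V > 0, (1 : ℝ) / 2 ≤ V * ε V)
    (hεsq : Tendsto (fun V => V * (ε V) ^ 2) atTop (nhds 0)) :
    Tendsto (fun V : ℝ =>
        V * (sInf (φ '' Metric.ball x (ε V)) -
             sInf (φ '' Metric.ball (x - V⁻¹ • νv) (ε V))))
      atTop (nhds (fderiv ℝ φ x νv)) := by
  have hφ1 : Differentiable ℝ φ := hφ.differentiable (by norm_num)
  set L := fderiv ℝ φ x with hLdef
  -- local Lipschitz bound on the derivative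
  obtain ⟨K, t, ht, hK⟩ :=
    ((hφ.fderiv_right (by norm_num)).contDiffAt (x := x)).exists_lipschitzOnWith
  obtain ⟨δ, hδ, hδt⟩ := Metric.nhds_basis_closedBall.mem_iff.1 ht
  -- ε tends to 0
  have hε0 : Tendsto ε atTop (𝓝 0) := by
    apply squeeze_zero' (eventually_atTop.2 ⟨1, fun V hV => (hεpos V (by linarith)).le⟩)
      (eventually_atTop.2 ⟨1, fun V hV => ?_⟩) (by simpa using hεsq.const_mul 2)
    have h1 := hεlow V (by linarith)
    have h2 := hεpos V (by linarith)
    nlinarith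
  have hr0 : Tendsto (fun V : ℝ => ε V + V⁻¹ * ‖νv‖) atTop (𝓝 0) := by
    simpa using hε0.add (tendsto_inv_atTop_zero.mul_const ‖νv‖)
  -- the key eventual bound
  have key : ∀ᶠ V in atTop,
      |V * (sInf (φ '' Metric.ball x (ε V)) -
            sInf (φ '' Metric.ball (x - V⁻¹ • νv) (ε V))) - L νv|
        ≤ (K : ℝ) * (ε V + V⁻¹ * ‖νv‖) * ‖νv‖ := by
    have hsmall : ∀ᶠ V in atTop, ε V + V⁻¹ * ‖νv‖ ≤ δ :=
      hr0.eventually_le_const hδ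
    filter_upwards [hsmall, eventually_gt_atTop 0] with V hVδ hV
    set h : EuclideanSpace ℝ (Fin N) := V⁻¹ • νv with hhdef
    have hεV := hεpos V hV
    have hnormh : ‖h‖ = V⁻¹ * ‖νv‖ := by
      rw [hhdef, norm_smul, Real.norm_eq_abs, abs_of_pos (inv_pos.2 hV)]
    set r : ℝ := ε V + V⁻¹ * ‖νv‖ with hrdef
    have hrpos : 0 < r := by positivity
    -- derivative bound on closedBall x r
    have hbound : ∀ ξ ∈ Metric.closedBall x r, ‖fderiv ℝ φ ξ - L‖ ≤ (K : ℝ) * r := by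
      intro ξ hξ
      have hξt : ξ ∈ t := hδt (Metric.closedBall_subset_closedBall hVδ hξ)
      have hxt : x ∈ t := hδt (Metric.mem_closedBall_self hδ.le)
      calc ‖fderiv ℝ φ ξ - L‖ = dist (fderiv ℝ φ ξ) (fderiv ℝ φ x) := (dist_eq_norm _ _).symm
        _ ≤ (K : ℝ) * dist ξ x := hK.dist_le_mul ξ hξt x hxt
        _ ≤ (K : ℝ) * r := by
            have := Metric.mem_closedBall.1 hξ
            exact mul_le_mul_of_nonneg_left this K.2
    -- mean value inequality for y ↦ φ y - L y on closedBall x r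
    have mvt : ∀ a ∈ Metric.closedBall x r, ∀ b ∈ Metric.closedBall x r,
        ‖(φ b - L b) - (φ a - L a)‖ ≤ (K : ℝ) * r * ‖b - a‖ := by
      intro a ha b hb
      exact Convex.norm_image_sub_le_of_norm_hasFDerivWithin_le
        (f := fun y => φ y - L y) (f' := fun ξ => fderiv ℝ φ ξ - L)
        (fun ξ _ => ((hφ1 ξ).hasFDerivAt.sub L.hasFDerivAt).hasFDerivWithinAt)
        hbound (convex_closedBall x r) ha hb
    -- estimate on translates
    have est : ∀ y ∈ Metric.ball (x - h) (ε V),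
        |φ (y + h) - φ y - L h| ≤ (K : ℝ) * r * ‖h‖ := by
      intro y hy
      have hy' : ‖y - (x - h)‖ < ε V := by
        simpa [dist_eq_norm] using hy
      have hya : y ∈ Metric.closedBall x r := by
        rw [Metric.mem_closedBall, dist_eq_norm]
        have : y - x = (y - (x - h)) + (-h) := by abel
        rw [this]
        calc ‖(y - (x - h)) + (-h)‖ ≤ ‖y - (x - h)‖ + ‖-h‖ := norm_add_le _ _
          _ ≤ ε V + ‖h‖ := by rw [norm_neg]; exact add_le_add hy'.le le_rfl
          _ = r := by rw [hrdef, hnormh]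
      have hyb : y + h ∈ Metric.closedBall x r := by
        rw [Metric.mem_closedBall, dist_eq_norm]
        have : y + h - x = y - (x - h) := by abel
        rw [this]
        calc ‖y - (x - h)‖ ≤ ε V := hy'.le
          _ ≤ r := by
              have : 0 ≤ V⁻¹ * ‖νv‖ := by positivity
              rw [hrdef]; linarith
      have := mvt y hya (y + h) hyb
      have hsub : (y + h) - y = h := by abel
      rw [hsub] at this
      have hLadd : L (y + h) = L y + L h := by rw [map_add]
      rw [Real.norm_eq_abs] at this
      calc |φ (y + h) - φ y - L h| = |(φ (y + h) - L (y + h)) - (φ y - L y)| := by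
            rw [hLadd]; ring_nf
        _ ≤ (K : ℝ) * r * ‖h‖ := this
    -- infima comparison
    set I₁ := sInf (φ '' Metric.ball x (ε V)) with hI1
    set I₂ := sInf (φ '' Metric.ball (x - h) (ε V)) with hI2
    have hbdd : ∀ z : EuclideanSpace ℝ (Fin N), BddBelow (φ '' Metric.ball z (ε V)) :=
      fun z => BddBelow.mono (Set.image_mono Metric.ball_subset_closedBall)
        ((isCompact_closedBall z (ε V)).image hφ.continuous).bddBelow
    have hne : ∀ z : EuclideanSpace ℝ (Fin N), (φ '' Metric.ball z (ε V)).Nonempty :=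
      fun z => (Metric.nonempty_ball.2 hεV).image φ
    have cmp1 : I₁ - (L h + (K : ℝ) * r * ‖h‖) ≤ I₂ := by
      apply le_csInf (hne _)
      rintro b ⟨y, hy, rfl⟩
      have h1 : I₁ ≤ φ (y + h) := by
        apply csInf_le (hbdd x)
        refine ⟨y + h, ?_, rfl⟩
        rw [Metric.mem_ball, dist_eq_norm]
        have : y + h - x = y - (x - h) := by abel
        rw [this]
        simpa [dist_eq_norm] using hy
      have h2 := abs_le.1 (est y hy)
      linarith [h2.2]
    have cmp2 : I₂ + L h - (K : ℝ) * r * ‖h‖ ≤ I₁ := by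
      have : I₂ - (- L h + (K : ℝ) * r * ‖h‖) ≤ I₁ := by
        apply le_csInf (hne _)
        rintro b ⟨y', hy', rfl⟩
        have hmem : y' - h ∈ Metric.ball (x - h) (ε V) := by
          rw [Metric.mem_ball, dist_eq_norm]
          have : y' - h - (x - h) = y' - x := by abel
          rw [this]
          simpa [dist_eq_norm] using hy'
        have h1 : I₂ ≤ φ (y' - h) := csInf_le (hbdd _) ⟨y' - h, hmem, rfl⟩
        have h2 := abs_le.1 (est (y' - h) hmem)
        have hyh : y' - h + h = y' := by abel
        rw [hyh] at h2
        linarith [h2.1]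
      linarith
    have habs : |I₁ - I₂ - L h| ≤ (K : ℝ) * r * ‖h‖ :=
      abs_le.2 ⟨by linarith, by linarith⟩
    -- rescale by V
    have hLh : L h = V⁻¹ * L νv := by rw [hhdef, map_smul, smul_eq_mul]
    have hVne : (V : ℝ) ≠ 0 := ne_of_gt hV
    have heq : V * (I₁ - I₂) - L νv = V * (I₁ - I₂ - L h) := by
      rw [hLh]; field_simp
    rw [heq, abs_mul, abs_of_pos hV]
    calc V * |I₁ - I₂ - L h| ≤ V * ((K : ℝ) * r * ‖h‖) := by
          exact mul_le_mul_of_nonneg_left habs hV.le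
      _ = (K : ℝ) * r * ‖νv‖ := by rw [hnormh]; field_simp
  -- conclude by squeezing
  have hg : Tendsto (fun V : ℝ => (K : ℝ) * (ε V + V⁻¹ * ‖νv‖) * ‖νv‖) atTop (𝓝 0) := by
    have := (hr0.const_mul (K : ℝ)).mul_const ‖νv‖
    simpa using this
  have hzero : Tendsto (fun V : ℝ =>
      V * (sInf (φ '' Metric.ball x (ε V)) -
           sInf (φ '' Metric.ball (x - V⁻¹ • νv) (ε V))) - L νv) atTop (𝓝 0) := by
    apply squeeze_zero_norm' _ hg
    simpa [Real.norm_eq_abs] using key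
  have := hzero.add_const (L νv)
  simpa using this
end

section
/- Let (π_V)_{V>0} be a family of Borel probability measures on ℝ^N, let φ^ss : ℝ^N → ℝ be twice continuously differentiable, and for ε > 0, V > 0 set k^ε(V,y) := π_V(B_ε(y)) · exp(V · inf_{z ∈ B_ε(y)} φ^ss(z)). Assume there exist a continuous positive function K on a neighborhood U of x ∈ ℝ^N and positive continuous functions f^ε(V) such that k^ε(V,y)/f^ε(V) → K(y) as V → ∞ and ε → 0⁺, uniformly for y ∈ U (i.e. for every δ > 0 there exist V₀ and ε₀ such that |k^ε(V,y)/f^ε(V) − K(y)| < δ for all V > V₀, 0 < ε < ε₀, y ∈ U). Then for any function ε̃ : (0,∞) → (0,∞) with V·ε̃(V) ≥ 1/2 and lim_{V→∞} V·ε̃(V)² = 0, and any ν ∈ ℤ^N, one has π_V(B_{ε̃(V)}(x)) > 0 for all sufficiently large V and lim_{V→∞} π_V(B_{ε̃(V)}(x − ν/V)) / π_V(B_{ε̃(V)}(x)) = exp(ν · ∇φ^ss(x)). -/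
open Real Filter Topology MeasureTheory Metric Set

private lemma abs_csInf_image_sub_le {α : Type*} {s : Set α} (hs : s.Nonempty)
    {φ ψ : α → ℝ} {c : ℝ} (h : ∀ z ∈ s, |φ z - ψ z| ≤ c)
    {m : ℝ} (hm : ∀ z ∈ s, m ≤ ψ z) :
    |sInf (φ '' s) - sInf (ψ '' s)| ≤ c := by
  have hbψ : BddBelow (ψ '' s) := ⟨m, by rintro b ⟨z, hz, rfl⟩; exact hm z hz⟩
  have hbφ : BddBelow (φ '' s) := ⟨m - c, by
    rintro b ⟨z, hz, rfl⟩
    have h1 := (abs_le.1 (h z hz)).1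
    linarith [hm z hz]⟩
  rw [abs_le]
  constructor
  · have key : sInf (ψ '' s) - c ≤ sInf (φ '' s) := by
      refine le_csInf (hs.image φ) ?_
      rintro b ⟨z, hz, rfl⟩
      have h1 := csInf_le hbψ (mem_image_of_mem ψ hz)
      linarith [(abs_le.1 (h z hz)).1]
    linarith
  · have key : sInf (φ '' s) - c ≤ sInf (ψ '' s) := by
      refine le_csInf (hs.image ψ) ?_
      rintro b ⟨z, hz, rfl⟩
      have h1 := csInf_le hbφ (mem_image_of_mem φ hz)
      linarith [(abs_le.1 (h z hz)).2]
    linarith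

private lemma sInf_image_affine_ball_shift {E : Type*} [NormedAddCommGroup E]
    [NormedSpace ℝ E] (L : E →L[ℝ] ℝ) (a : ℝ) (x v : E) {r : ℝ} (hr : 0 < r) :
    sInf ((fun z => a + L (z - x)) '' ball (x - v) r)
      = sInf ((fun z => a + L (z - x)) '' ball x r) - L v := by
  have himg : (fun z => a + L (z - x)) '' ball (x - v) r
      = (fun t => t + -(L v)) '' ((fun z => a + L (z - x)) '' ball x r) := by
    rw [← Set.image_comp]
    ext t
    simp only [Set.mem_image, mem_ball, Function.comp]
    constructor
    · rintro ⟨z, hz, rfl⟩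
      refine ⟨z + v, ?_, ?_⟩
      · have e : z + v - x = z - (x - v) := by abel
        rw [dist_eq_norm, e, ← dist_eq_norm]; exact hz
      · have e : z + v - x = (z - x) + v := by abel
        rw [e, map_add]; ring
    · rintro ⟨z, hz, rfl⟩
      refine ⟨z - v, ?_, ?_⟩
      · have e : z - v - (x - v) = z - x := by abel
        rw [dist_eq_norm, e, ← dist_eq_norm]; exact hz
      · have e : z - v - x = (z - x) - v := by abel
        rw [e, map_sub]; ring
  have hne : ((fun z => a + L (z - x)) '' ball x r).Nonempty :=
    (Metric.nonempty_ball.2 hr).image _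
  have hbdd : BddBelow ((fun z => a + L (z - x)) '' ball x r) := by
    refine ⟨a - ‖L‖ * r, ?_⟩
    rintro b ⟨z, hz, rfl⟩
    have h1 : ‖L (z - x)‖ ≤ ‖L‖ * ‖z - x‖ := L.le_opNorm _
    have h2 : ‖z - x‖ ≤ r := by
      rw [← dist_eq_norm]; exact (mem_ball.1 hz).le
    have h3 : ‖L‖ * ‖z - x‖ ≤ ‖L‖ * r := mul_le_mul_of_nonneg_left h2 (norm_nonneg L)
    have h4 : |L (z - x)| ≤ ‖L‖ * r := by
      rw [← Real.norm_eq_abs]; exact h1.trans h3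
    have h5 := (abs_le.1 h4).1
    simp only []
    linarith
  have hco : (fun t : ℝ => t + -(L v)) = ⇑(OrderIso.addRight (-(L v))) := rfl
  rw [himg, hco, ← (OrderIso.addRight (-(L v))).map_csInf' hne hbdd]
  simp [sub_eq_add_neg]

/-- Key lemma. If `k^ε(V,y) = π_V(B_ε(y))·exp(V·inf_{B_ε(y)} φ^ss)`
normalized by positive functions `f^ε(V)` converges, as `V → ∞` and `ε → 0⁺`,
uniformly on a neighborhood of `x` to a continuous positive function `K`, then
for shrinking balls of radius `ε̃(V)` (with `V·ε̃(V) ≥ 1/2`, `V·ε̃(V)² → 0`) the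
balls have positive mass for large `V` and the ratio of the masses of the balls
centered at `x - ν/V` and at `x` converges to `exp(ν·∇φ^ss(x))`. -/
theorem steady_state_measure_ratio_limit
    (N : ℕ) (μ : ℝ → Measure (EuclideanSpace ℝ (Fin N)))
    (hμ : ∀ V, IsProbabilityMeasure (μ V))
    (φss : EuclideanSpace ℝ (Fin N) → ℝ)
    (hφss : ContDiff ℝ 2 φss)
    (x : EuclideanSpace ℝ (Fin N))
    (U : Set (EuclideanSpace ℝ (Fin N))) (hU : U ∈ nhds x)
    (K : EuclideanSpace ℝ (Fin N) → ℝ)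
    (hKcont : ContinuousOn K U) (hKpos : ∀ y ∈ U, 0 < K y)
    (f : ℝ → ℝ → ℝ)
    (hfpos : ∀ ε V, 0 < f ε V) (hfcont : ∀ ε, Continuous (f ε))
    (huniform : ∀ δ > 0, ∃ V₀ : ℝ, ∃ ε₀ > 0, ∀ V > V₀, ∀ ε : ℝ, 0 < ε → ε < ε₀ →
      ∀ y ∈ U,
        |((μ V (Metric.ball y ε)).toReal *
            Real.exp (V * sInf (φss '' Metric.ball y ε))) / f ε V - K y| < δ)
    (ε : ℝ → ℝ)
    (hεpos : ∀ V > 0, 0 < ε V)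
    (hεlow : ∀ V > 0, (1 : ℝ) / 2 ≤ V * ε V)
    (hεsq : Tendsto (fun V => V * (ε V) ^ 2) atTop (nhds 0))
    (ν : Fin N → ℤ)
    (νv : EuclideanSpace ℝ (Fin N)) (hνv : ∀ i, νv i = (ν i : ℝ)) :
    (∀ᶠ V in atTop, 0 < μ V (Metric.ball x (ε V))) ∧
    Tendsto (fun V : ℝ =>
        (μ V (Metric.ball (x - V⁻¹ • νv) (ε V))).toReal /
        (μ V (Metric.ball x (ε V))).toReal)
      atTop (nhds (Real.exp (fderiv ℝ φss x νv))) := by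
  have hxU : x ∈ U := mem_of_mem_nhds hU
  set L := fderiv ℝ φss x with hL
  set c := ‖νv‖ with hc
  set ρ : ℝ → ℝ := fun V => ε V + c * V⁻¹ with hρ
  -- ε → 0
  have hε0 : Tendsto ε atTop (𝓝 0) := by
    refine tendsto_of_tendsto_of_tendsto_of_le_of_le' tendsto_const_nhds
      (by simpa using hεsq.const_mul 2) ?_ ?_
    · filter_upwards [eventually_gt_atTop 0] with V hV
      exact (hεpos V hV).le
    · filter_upwards [eventually_gt_atTop 0] with V hV
      have h1 := hεlow V hV
      have h2 := hεpos V hV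
      nlinarith
  -- ρ → 0
  have hρ0 : Tendsto ρ atTop (𝓝 0) := by
    have := hε0.add (tendsto_inv_atTop_zero.const_mul c)
    simpa using this
  -- V ρ² → 0
  have hVρ2 : Tendsto (fun V => V * ρ V ^ 2) atTop (𝓝 0) := by
    have hrhs : Tendsto (fun V => V * ε V ^ 2 + ((2 * c) * ε V + c ^ 2 * V⁻¹))
        atTop (𝓝 0) := by
      have := hεsq.add ((hε0.const_mul (2 * c)).add (tendsto_inv_atTop_zero.const_mul (c ^ 2)))
      simpa using this
    refine hrhs.congr' ?_
    filter_upwards [eventually_gt_atTop 0] with V hV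
    have hV0 : V ≠ 0 := ne_of_gt hV
    simp only [hρ]
    field_simp
    ring
  -- x - V⁻¹ • νv → x
  have hv0 : Tendsto (fun V : ℝ => V⁻¹ • νv) atTop (𝓝 0) := by
    have := tendsto_inv_atTop_zero.smul_const (M := ℝ) νv
    simpa using this
  have hxv : Tendsto (fun V : ℝ => x - V⁻¹ • νv) atTop (𝓝 x) := by
    have h := (tendsto_const_nhds : Tendsto (fun _ : ℝ => x) atTop (𝓝 x)).sub hv0
    simpa using h
  have hUe : ∀ᶠ z in 𝓝 x, z ∈ U := hU
  have hxvU : ∀ᶠ V in atTop, x - V⁻¹ • νv ∈ U := hxv.eventually hUe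
  -- Lipschitz bound for fderiv near x
  have hfd : ContDiff ℝ 1 (fderiv ℝ φss) := hφss.fderiv_right (by norm_num)
  obtain ⟨Kc, t, ht, hlip⟩ := hfd.contDiffAt.exists_lipschitzOnWith (x := x)
  obtain ⟨r, hr0, hrsub⟩ : ∃ r > 0, closedBall x r ⊆ t ∩ U := by
    have h1 : t ∩ U ∈ 𝓝 x := Filter.inter_mem ht hU
    rcases Metric.nhds_basis_closedBall.mem_iff.1 h1 with ⟨r, hr, h⟩
    exact ⟨r, hr, h⟩
  -- THE INF ESTIMATE
  have hIbound : ∀ᶠ V in atTop,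
      |V * (sInf (φss '' ball x (ε V)) - sInf (φss '' ball (x - V⁻¹ • νv) (ε V))) - L νv|
        ≤ 2 * Kc * (V * ρ V ^ 2) := by
    filter_upwards [eventually_gt_atTop 0, hρ0.eventually (gt_mem_nhds hr0)]
      with V hV0 hρr
    have hεV : 0 < ε V := hεpos V hV0
    have hvnorm : ‖V⁻¹ • νv‖ = c * V⁻¹ := by
      rw [norm_smul, Real.norm_eq_abs, abs_of_pos (inv_pos.2 hV0)]; ring
    have hρpos : 0 < ρ V := by
      have : 0 ≤ c * V⁻¹ := mul_nonneg (norm_nonneg _) (inv_pos.2 hV0).le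
      simp only [hρ]; linarith
    have hsub2 : ball x (ε V) ⊆ closedBall x (ρ V) := by
      refine (ball_subset_closedBall).trans (closedBall_subset_closedBall ?_)
      have : 0 ≤ c * V⁻¹ := mul_nonneg (norm_nonneg _) (inv_pos.2 hV0).le
      simp only [hρ]; linarith
    have hsub1 : ball (x - V⁻¹ • νv) (ε V) ⊆ closedBall x (ρ V) := by
      intro z hz
      have h1 : dist z (x - V⁻¹ • νv) < ε V := mem_ball.1 hz
      have h2 : dist (x - V⁻¹ • νv) x = ‖V⁻¹ • νv‖ := by
        rw [dist_eq_norm]; simp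
      have := dist_triangle z (x - V⁻¹ • νv) x
      rw [mem_closedBall]
      simp only [hρ]
      rw [h2, hvnorm] at this
      linarith
    -- Taylor estimate on closedBall x (ρ V)
    have htay : ∀ z ∈ closedBall x (ρ V),
        |φss z - (φss x + L (z - x))| ≤ Kc * ρ V * ρ V := by
      intro z hz
      have hballsub : closedBall x (ρ V) ⊆ closedBall x r :=
        closedBall_subset_closedBall hρr.le
      have hder : ∀ w ∈ closedBall x (ρ V), DifferentiableAt ℝ φss w := fun w _ =>
        hφss.differentiable (by norm_num) w
      have hbound : ∀ w ∈ closedBall x (ρ V), ‖fderiv ℝ φss w - L‖ ≤ Kc * ρ V := by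
        intro w hw
        have hwt : w ∈ t := (hrsub (hballsub hw)).1
        have hxt : x ∈ t := (hrsub (hballsub (mem_closedBall_self hρpos.le))).1
        have := hlip.dist_le_mul w hwt x hxt
        rw [dist_eq_norm] at this
        refine this.trans ?_
        have : dist w x ≤ ρ V := mem_closedBall.1 hw
        exact mul_le_mul_of_nonneg_left this Kc.coe_nonneg
      have key := (convex_closedBall x (ρ V)).norm_image_sub_le_of_norm_fderiv_le'
        hder hbound (mem_closedBall_self hρpos.le) hz
      have hz' : ‖z - x‖ ≤ ρ V := by rw [← dist_eq_norm]; exact mem_closedBall.1 hz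
      have : ‖φss z - φss x - L (z - x)‖ ≤ Kc * ρ V * ρ V := by
        refine key.trans ?_
        have h1 : (Kc : ℝ) * ρ V * ‖z - x‖ ≤ Kc * ρ V * ρ V :=
          mul_le_mul_of_nonneg_left hz' (mul_nonneg Kc.coe_nonneg hρpos.le)
        exact h1
      rw [Real.norm_eq_abs] at this
      convert this using 2
      ring
    -- lower bounds for the affine map on the balls
    have hmlow : ∀ z ∈ closedBall x (ρ V),
        φss x - ‖L‖ * ρ V ≤ φss x + L (z - x) := by
      intro z hz
      have h1 : ‖L (z - x)‖ ≤ ‖L‖ * ‖z - x‖ := L.le_opNorm _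
      have h2 : ‖z - x‖ ≤ ρ V := by rw [← dist_eq_norm]; exact mem_closedBall.1 hz
      have h3 : ‖L‖ * ‖z - x‖ ≤ ‖L‖ * ρ V := mul_le_mul_of_nonneg_left h2 (norm_nonneg L)
      have h4 : |L (z - x)| ≤ ‖L‖ * ρ V := by
        rw [← Real.norm_eq_abs]; exact h1.trans h3
      linarith [(abs_le.1 h4).1]
    set ψ : EuclideanSpace ℝ (Fin N) → ℝ := fun z => φss x + L (z - x) with hψ
    have h₂ : |sInf (φss '' ball x (ε V)) - sInf (ψ '' ball x (ε V))| ≤ Kc * ρ V * ρ V :=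
      abs_csInf_image_sub_le (nonempty_ball.2 hεV)
        (fun z hz => htay z (hsub2 hz)) (fun z hz => hmlow z (hsub2 hz))
    have h₁ : |sInf (φss '' ball (x - V⁻¹ • νv) (ε V))
        - sInf (ψ '' ball (x - V⁻¹ • νv) (ε V))| ≤ Kc * ρ V * ρ V :=
      abs_csInf_image_sub_le (nonempty_ball.2 hεV)
        (fun z hz => htay z (hsub1 hz)) (fun z hz => hmlow z (hsub1 hz))
    have hshift : sInf (ψ '' ball (x - V⁻¹ • νv) (ε V))
        = sInf (ψ '' ball x (ε V)) - L (V⁻¹ • νv) :=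
      sInf_image_affine_ball_shift L (φss x) x (V⁻¹ • νv) hεV
    have e1 : V * L (V⁻¹ • νv) = L νv := by
      rw [L.map_smul, smul_eq_mul]
      field_simp
    have hX : |(sInf (φss '' ball x (ε V)) - sInf (φss '' ball (x - V⁻¹ • νv) (ε V)))
        - L (V⁻¹ • νv)| ≤ 2 * (Kc * ρ V * ρ V) := by
      clear_value L c ρ ψ
      rw [hshift] at h₁
      have a2 := abs_le.1 h₂
      have a1 := abs_le.1 h₁
      rw [abs_le]
      constructor <;> linarith [a2.1, a2.2, a1.1, a1.2]
    have e2 : V * (sInf (φss '' ball x (ε V)) - sInf (φss '' ball (x - V⁻¹ • νv) (ε V)))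
        - L νv
        = V * ((sInf (φss '' ball x (ε V)) - sInf (φss '' ball (x - V⁻¹ • νv) (ε V)))
            - L (V⁻¹ • νv)) := by
      rw [← e1]; ring
    rw [e2, abs_mul, abs_of_pos hV0]
    calc V * |(sInf (φss '' ball x (ε V)) - sInf (φss '' ball (x - V⁻¹ • νv) (ε V)))
            - L (V⁻¹ • νv)|
        ≤ V * (2 * (Kc * ρ V * ρ V)) := mul_le_mul_of_nonneg_left hX hV0.le
      _ = 2 * Kc * (V * ρ V ^ 2) := by ring
  -- tendsto of the exponent
  have hI : Tendsto (fun V => V * (sInf (φss '' ball x (ε V))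
      - sInf (φss '' ball (x - V⁻¹ • νv) (ε V)))) atTop (𝓝 (L νv)) := by
    have h0 : Tendsto (fun V => V * (sInf (φss '' ball x (ε V))
        - sInf (φss '' ball (x - V⁻¹ • νv) (ε V))) - L νv) atTop (𝓝 0) := by
      refine squeeze_zero_norm' ?_ (by simpa using hVρ2.const_mul (2 * (Kc : ℝ)))
      filter_upwards [hIbound] with V hV
      simpa [Real.norm_eq_abs] using hV
    have := h0.add_const (L νv)
    simpa using this
  have hE : Tendsto (fun V => Real.exp (V * (sInf (φss '' ball x (ε V))
      - sInf (φss '' ball (x - V⁻¹ • νv) (ε V))))) atTop (𝓝 (Real.exp (L νv))) :=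
    (Real.continuous_exp.tendsto _).comp hI
  -- the normalized quantities converge to K x
  have haux : ∀ y : ℝ → EuclideanSpace ℝ (Fin N), (∀ᶠ V in atTop, y V ∈ U) →
      Tendsto (fun V => K (y V)) atTop (𝓝 (K x)) →
      Tendsto (fun V => (μ V (ball (y V) (ε V))).toReal
        * Real.exp (V * sInf (φss '' ball (y V) (ε V))) / f (ε V) V)
        atTop (𝓝 (K x)) := by
    intro y hyU hyK
    rw [Metric.tendsto_nhds]
    intro δ hδ
    obtain ⟨V₀, ε₀, hε₀, hU2⟩ := huniform (δ / 2) (by linarith)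
    filter_upwards [eventually_gt_atTop (max V₀ 0), hε0.eventually (gt_mem_nhds hε₀),
      hyU, (Metric.tendsto_nhds.1 hyK) (δ / 2) (by linarith)] with V hV hVε hyUV hK2
    have hVpos : 0 < V := lt_of_le_of_lt (le_max_right _ _) hV
    have h1 := hU2 V (lt_of_le_of_lt (le_max_left _ _) hV) (ε V)
      (hεpos V hVpos) hVε (y V) hyUV
    rw [Real.dist_eq] at hK2 ⊢
    have tri := abs_sub_le ((μ V (ball (y V) (ε V))).toReal
        * Real.exp (V * sInf (φss '' ball (y V) (ε V))) / f (ε V) V) (K (y V)) (K x)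
    linarith
  have hKxv : Tendsto (fun V : ℝ => K (x - V⁻¹ • νv)) atTop (𝓝 (K x)) := by
    have hcw : ContinuousWithinAt K U x := hKcont x hxU
    exact hcw.tendsto.comp (tendsto_nhdsWithin_iff.2 ⟨hxv, hxvU⟩)
  have ha := haux (fun V => x - V⁻¹ • νv) hxvU hKxv
  have hb := haux (fun _ => x) (Eventually.of_forall fun _ => hxU) tendsto_const_nhds
  have hKx0 : K x ≠ 0 := ne_of_gt (hKpos x hxU)
  have hbpos : ∀ᶠ V in atTop, 0 < (μ V (ball x (ε V))).toReal
      * Real.exp (V * sInf (φss '' ball x (ε V))) / f (ε V) V :=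
    hb.eventually (lt_mem_nhds (hKpos x hxU))
  have hmpos : ∀ᶠ V in atTop, 0 < (μ V (ball x (ε V))).toReal := by
    filter_upwards [hbpos] with V hbV
    rcases eq_or_lt_of_le (ENNReal.toReal_nonneg :
        (0:ℝ) ≤ (μ V (ball x (ε V))).toReal) with h | h
    · rw [← h] at hbV; simp at hbV
    · exact h
  constructor
  · filter_upwards [hmpos] with V hV
    rcases eq_or_lt_of_le (zero_le : (0 : ENNReal) ≤ μ V (ball x (ε V))) with h | h
    · rw [← h] at hV; simp at hV
    · exact h
  · have hlim : Tendsto (fun V => ((μ V (ball (x - V⁻¹ • νv) (ε V))).toReal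
        * Real.exp (V * sInf (φss '' ball (x - V⁻¹ • νv) (ε V))) / f (ε V) V)
        / ((μ V (ball x (ε V))).toReal
        * Real.exp (V * sInf (φss '' ball x (ε V))) / f (ε V) V)
        * Real.exp (V * (sInf (φss '' ball x (ε V))
          - sInf (φss '' ball (x - V⁻¹ • νv) (ε V)))))
        atTop (𝓝 (K x / K x * Real.exp (L νv))) := (ha.div hb hKx0).mul hE
    rw [div_self hKx0, one_mul] at hlim
    refine hlim.congr' ?_
    filter_upwards [hmpos] with V hm
    set m₁ := (μ V (ball (x - V⁻¹ • νv) (ε V))).toReal with hm₁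
    set m₂ := (μ V (ball x (ε V))).toReal with hm₂
    set i₁ := sInf (φss '' ball (x - V⁻¹ • νv) (ε V)) with hi₁
    set i₂ := sInf (φss '' ball x (ε V)) with hi₂
    have hEe : Real.exp (V * (i₂ - i₁)) = Real.exp (V * i₂) / Real.exp (V * i₁) := by
      rw [← Real.exp_sub]; ring_nf
    rw [hEe]
    have hf0 : f (ε V) V ≠ 0 := ne_of_gt (hfpos (ε V) V)
    have hm0 : m₂ ≠ 0 := ne_of_gt hm
    have he1 : Real.exp (V * i₁) ≠ 0 := Real.exp_ne_zero _
    have he2 : Real.exp (V * i₂) ≠ 0 := Real.exp_ne_zero _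
    field_simp
end

section
/- Let φ : (0,∞)^N → ℝ be differentiable and satisfy the Hamilton–Jacobi equation at x ∈ (0,∞)^N. Then the macroscopic housekeeping heat dissipation rate q_hk[x] := Σ_{ℓ=1}^M (R_{−ℓ}(x) − R_{+ℓ}(x)) ln( (R_{−ℓ}(x)/R_{+ℓ}(x)) exp(−ν_ℓ·∇φ(x)) ) is nonnegative, and q_hk[x] = 0 if and only if the weak detailed balance condition holds at x: ln(R_{+ℓ}(x)/R_{−ℓ}(x)) = −ν_ℓ·∇φ(x) for every ℓ = 1,…,M. -/
open Real Filter Topology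

/-- Key pointwise inequality with equality case. -/
lemma hk_key (a b z : ℝ) (ha : 0 < a) (hb : 0 < b) :
    a * (1 - Real.exp z) + b * (1 - Real.exp (-z)) ≤
      (a - b) * (Real.log a - Real.log b + z) ∧
    (a * (1 - Real.exp z) + b * (1 - Real.exp (-z)) =
      (a - b) * (Real.log a - Real.log b + z) ↔
      Real.log a - Real.log b + z = 0) := by
  set w := Real.log a - Real.log b + z with hw
  have h1 : a * Real.exp z = b * Real.exp w := by
    rw [hw, show Real.log a - Real.log b + z = (Real.log a + z) - Real.log b by ring,
      Real.exp_sub, Real.exp_add, Real.exp_log ha, Real.exp_log hb]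
    field_simp
  have h2 : b * Real.exp (-z) = a * Real.exp (-w) := by
    rw [hw, show -(Real.log a - Real.log b + z) = (Real.log b + (-z)) - Real.log a by ring,
      Real.exp_sub, Real.exp_add, Real.exp_log ha, Real.exp_log hb]
    field_simp
  have e1 : w + 1 ≤ Real.exp w := Real.add_one_le_exp w
  have e2 : -w + 1 ≤ Real.exp (-w) := Real.add_one_le_exp (-w)
  constructor
  · nlinarith [mul_le_mul_of_nonneg_left e1 hb.le, mul_le_mul_of_nonneg_left e2 ha.le]
  · constructor
    · intro heq
      by_contra hne
      have l1 : w + 1 < Real.exp w := Real.add_one_lt_exp hne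
      have l2 : -w + 1 < Real.exp (-w) := Real.add_one_lt_exp (neg_ne_zero.mpr hne)
      nlinarith [mul_lt_mul_of_pos_left l1 hb, mul_lt_mul_of_pos_left l2 ha]
    · intro h0
      have hew : Real.exp w = 1 := by rw [h0, Real.exp_zero]
      have hew' : Real.exp (-w) = 1 := by rw [h0, neg_zero, Real.exp_zero]
      rw [h0]
      nlinarith [h1, h2, hew, hew']

/-- At a point where the Hamilton–Jacobi equation holds, the
macroscopic housekeeping heat dissipation rate
`q_hk[x] = ∑ (R₋ - R₊) ln((R₋/R₊)·exp(-ν·∇φ))` is nonnegative, and vanishes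
iff the weak detailed balance condition `ln(R₊/R₋) = -ν·∇φ(x)` holds for
every reaction. -/
theorem housekeeping_heat_nonneg_and_zero_iff_weak_detailed_balance
    (N M : ℕ) (ν : Fin M → Fin N → ℤ)
    (Rp Rm : Fin M → (Fin N → ℝ) → ℝ)
    (hRp : ∀ ℓ (y : Fin N → ℝ), (∀ i, 0 < y i) → 0 < Rp ℓ y)
    (hRm : ∀ ℓ (y : Fin N → ℝ), (∀ i, 0 < y i) → 0 < Rm ℓ y)
    (x : Fin N → ℝ) (hx : ∀ i, 0 < x i)
    (φ : (Fin N → ℝ) → ℝ)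
    (hφ : DifferentiableAt ℝ φ x)
    (hHJE : ∑ ℓ,
        (Rp ℓ x * (1 - Real.exp (fderiv ℝ φ x (fun i => (ν ℓ i : ℝ)))) +
         Rm ℓ x * (1 - Real.exp (-(fderiv ℝ φ x (fun i => (ν ℓ i : ℝ)))))) = 0) :
    0 ≤ ∑ ℓ, (Rm ℓ x - Rp ℓ x) *
        Real.log (Rm ℓ x / Rp ℓ x *
          Real.exp (-(fderiv ℝ φ x (fun i => (ν ℓ i : ℝ))))) ∧
    ((∑ ℓ, (Rm ℓ x - Rp ℓ x) *
        Real.log (Rm ℓ x / Rp ℓ x *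
          Real.exp (-(fderiv ℝ φ x (fun i => (ν ℓ i : ℝ))))) = 0) ↔
      ∀ ℓ, Real.log (Rp ℓ x / Rm ℓ x) = -(fderiv ℝ φ x (fun i => (ν ℓ i : ℝ)))) := by
  set z : Fin M → ℝ := fun ℓ => fderiv ℝ φ x (fun i => (ν ℓ i : ℝ)) with hz
  have ha : ∀ ℓ, 0 < Rp ℓ x := fun ℓ => hRp ℓ x hx
  have hb : ∀ ℓ, 0 < Rm ℓ x := fun ℓ => hRm ℓ x hx
  -- rewrite each summand as (a-b)*w
  have hT : ∀ ℓ, (Rm ℓ x - Rp ℓ x) * Real.log (Rm ℓ x / Rp ℓ x * Real.exp (-(z ℓ)))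
      = (Rp ℓ x - Rm ℓ x) * (Real.log (Rp ℓ x) - Real.log (Rm ℓ x) + z ℓ) := by
    intro ℓ
    rw [Real.log_mul (div_pos (hb ℓ) (ha ℓ)).ne' (Real.exp_ne_zero _), Real.log_div (hb ℓ).ne' (ha ℓ).ne',
      Real.log_exp]
    ring
  have hkey := fun ℓ => hk_key (Rp ℓ x) (Rm ℓ x) (z ℓ) (ha ℓ) (hb ℓ)
  have hle : ∀ ℓ ∈ Finset.univ,
      Rp ℓ x * (1 - Real.exp (z ℓ)) + Rm ℓ x * (1 - Real.exp (-(z ℓ))) ≤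
      (Rm ℓ x - Rp ℓ x) * Real.log (Rm ℓ x / Rp ℓ x * Real.exp (-(z ℓ))) := by
    intro ℓ _
    rw [hT ℓ]
    exact (hkey ℓ).1
  have hsum := Finset.sum_le_sum hle
  rw [hHJE] at hsum
  refine ⟨hsum, ?_, ?_⟩
  · intro hzero
    -- each term equals the HJE term
    have hdiff : ∑ ℓ, ((Rm ℓ x - Rp ℓ x) * Real.log (Rm ℓ x / Rp ℓ x * Real.exp (-(z ℓ)))
        - (Rp ℓ x * (1 - Real.exp (z ℓ)) + Rm ℓ x * (1 - Real.exp (-(z ℓ))))) = 0 := by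
      rw [Finset.sum_sub_distrib, hzero, hHJE, sub_zero]
    have heach := (Finset.sum_eq_zero_iff_of_nonneg (fun ℓ _ => sub_nonneg.mpr (hle ℓ (Finset.mem_univ ℓ)))).mp hdiff
    intro ℓ
    have := heach ℓ (Finset.mem_univ ℓ)
    have heq : Rp ℓ x * (1 - Real.exp (z ℓ)) + Rm ℓ x * (1 - Real.exp (-(z ℓ))) =
        (Rp ℓ x - Rm ℓ x) * (Real.log (Rp ℓ x) - Real.log (Rm ℓ x) + z ℓ) := by
      rw [← hT ℓ]; linarith [this]
    have hw0 := (hkey ℓ).2.mp heq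
    rw [Real.log_div (ha ℓ).ne' (hb ℓ).ne']
    linarith
  · intro hdb
    apply Finset.sum_eq_zero
    intro ℓ _
    rw [hT ℓ]
    have := hdb ℓ
    rw [Real.log_div (ha ℓ).ne' (hb ℓ).ne'] at this
    have : Real.log (Rp ℓ x) - Real.log (Rm ℓ x) + z ℓ = 0 := by linarith
    rw [this, mul_zero]
end

section
/- Under the hypotheses of the fluctuation–dissipation theorem (F(q) = 0, φ three times continuously differentiable satisfying the Hamilton–Jacobi equation in a neighborhood of q with ν_ℓ·∇φ(q) = 0 for all ℓ, and R_{±ℓ} continuously differentiable), if in addition the Hessian matrix Ξ of φ at q is invertible, then A = −(B Ξ^{-1} + Ξ^{-1} Bᵀ), where A_{ij} = Σ_{ℓ=1}^M (R_{+ℓ}(q) + R_{−ℓ}(q)) ν_{ℓi} ν_{ℓj} and B_{ij} = ∂F_i(q)/∂x_j. -/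
open Real Filter Topology Matrix Asymptotics

lemma hasFDerivAt_mul_of_continuousAt {E : Type*} [NormedAddCommGroup E] [NormedSpace ℝ E]
    {f h : E → ℝ} {h' : E →L[ℝ] ℝ} {q : E}
    (hf : ContinuousAt f q) (hh : HasFDerivAt h h' q) (h0 : h q = 0) :
    HasFDerivAt (fun y => h y * f y) (f q • h') q := by
  have A : HasFDerivAt (fun y => h y * f q) (f q • h') q := by
    simpa [mul_comm] using hh.const_mul (f q)
  have B : HasFDerivAt (fun y => h y * (f y - f q)) (0 : E →L[ℝ] ℝ) q := by
    rw [hasFDerivAt_iff_isLittleO]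
    simp only [h0, zero_mul, sub_zero, ContinuousLinearMap.zero_apply]
    have hO : (fun y => h y) =O[nhds q] fun y => ‖y - q‖ := by
      simpa [h0] using hh.isBigO_sub.norm_right
    have hlo : (fun y => f y - f q) =o[nhds q] (fun _ => (1:ℝ)) := by
      rw [isLittleO_one_iff]
      simpa using hf.tendsto.sub_const (f q)
    have h2 := hO.mul_isLittleO hlo
    simp only [mul_one] at h2
    exact isLittleO_norm_right.mp h2
  have C := B.fun_add A
  simp only [zero_add] at C
  refine C.congr_of_eventuallyEq (Filter.Eventually.of_forall fun y => ?_)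
  beta_reduce
  ring

lemma clm_apply_pi {N : ℕ} (L : (Fin N → ℝ) →L[ℝ] ℝ) (x : Fin N → ℝ) :
    L x = ∑ i, x i * L (Pi.single i 1) := by
  have hx : x = ∑ i, x i • (Pi.single i 1 : Fin N → ℝ) := by
    funext j
    simp [Finset.sum_apply, Pi.single_apply]
  conv_lhs => rw [hx]
  rw [map_sum]
  simp [smul_eq_mul]

lemma sum_reorder3 {α β γ : Type*} [Fintype α] [Fintype β] [Fintype γ] (F : α → β → γ → ℝ) :
    ∑ a, ∑ b, ∑ c, F a b c = ∑ c, ∑ b, ∑ a, F a b c := by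
  calc ∑ a, ∑ b, ∑ c, F a b c
      = ∑ a, ∑ c, ∑ b, F a b c := Finset.sum_congr rfl fun a _ => Finset.sum_comm
    _ = ∑ c, ∑ a, ∑ b, F a b c := Finset.sum_comm
    _ = ∑ c, ∑ b, ∑ a, F a b c := Finset.sum_congr rfl fun c _ => Finset.sum_comm

set_option maxHeartbeats 2000000 in
/-- Fluctuation–dissipation theorem, invertible Hessian: under
the hypotheses of the FDT, if the Hessian `Ξ` of `φ` at `q` is invertible, then
`A = -(B Ξ⁻¹ + Ξ⁻¹ Bᵀ)`. -/
theorem fluctuation_dissipation_invertible_hessian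
    (N M : ℕ) (ν : Fin M → Fin N → ℤ)
    (Rp Rm : Fin M → (Fin N → ℝ) → ℝ)
    (hRp : ∀ ℓ (y : Fin N → ℝ), (∀ i, 0 < y i) → 0 < Rp ℓ y)
    (hRm : ∀ ℓ (y : Fin N → ℝ), (∀ i, 0 < y i) → 0 < Rm ℓ y)
    (hRpC1 : ∀ ℓ, ContDiff ℝ 1 (Rp ℓ))
    (hRmC1 : ∀ ℓ, ContDiff ℝ 1 (Rm ℓ))
    (q : Fin N → ℝ) (hq : ∀ i, 0 < q i)
    (hss : ∀ i, ∑ ℓ, (ν ℓ i : ℝ) * (Rp ℓ q - Rm ℓ q) = 0)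
    (φ : (Fin N → ℝ) → ℝ)
    (hφ : ContDiff ℝ 3 φ)
    (hHJE : ∀ᶠ y in nhds q, ∑ ℓ,
        (Rp ℓ y * (1 - Real.exp (fderiv ℝ φ y (fun i => (ν ℓ i : ℝ)))) +
         Rm ℓ y * (1 - Real.exp (-(fderiv ℝ φ y (fun i => (ν ℓ i : ℝ)))))) = 0)
    (hgrad : ∀ ℓ, fderiv ℝ φ q (fun i => (ν ℓ i : ℝ)) = 0)
    (Ξ A B : Matrix (Fin N) (Fin N) ℝ)
    (hΞ : ∀ i j, Ξ i j = iteratedFDeriv ℝ 2 φ q ![Pi.single i 1, Pi.single j 1])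
    (hA : ∀ i j, A i j = ∑ ℓ, (Rp ℓ q + Rm ℓ q) * (ν ℓ i : ℝ) * (ν ℓ j : ℝ))
    (hB : ∀ i j, B i j =
      fderiv ℝ (fun y => ∑ ℓ, (ν ℓ i : ℝ) * (Rp ℓ y - Rm ℓ y)) q (Pi.single j 1))
    (hΞinv : IsUnit Ξ.det) :
    A = -(B * Ξ⁻¹ + Ξ⁻¹ * Bᵀ) := by
  classical
  set g : Fin M → (Fin N → ℝ) → ℝ :=
    fun ℓ y => fderiv ℝ φ y (fun i => (ν ℓ i : ℝ)) with hgdef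
  set Dg : Fin M → (Fin N → ℝ) → ((Fin N → ℝ) →L[ℝ] ℝ) :=
    fun ℓ y => fderiv ℝ (g ℓ) y with hDgdef
  have hφ1 : ContDiff ℝ 1 φ := hφ.of_le (by norm_num)
  have hf'C2 : ContDiff ℝ 2 (fderiv ℝ φ) := hφ.fderiv_right (by norm_num)
  have hf''C1 : ContDiff ℝ 1 (fderiv ℝ (fderiv ℝ φ)) := hf'C2.fderiv_right (by norm_num)
  have hgC2 : ∀ ℓ, ContDiff ℝ 2 (g ℓ) := fun ℓ =>
    (ContinuousLinearMap.apply ℝ ℝ (fun i => (ν ℓ i : ℝ))).contDiff.comp hf'C2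
  have hDgC1 : ∀ ℓ, ContDiff ℝ 1 (Dg ℓ) := fun ℓ => (hgC2 ℓ).fderiv_right (by norm_num)
  have hgq : ∀ ℓ, g ℓ q = 0 := hgrad
  have hgdiff : ∀ ℓ y, HasFDerivAt (g ℓ) (Dg ℓ y) y := fun ℓ y =>
    (((hgC2 ℓ).differentiable two_ne_zero) y).hasFDerivAt
  -- derivative building blocks
  have hexp : ∀ ℓ y, HasFDerivAt (fun z => Real.exp (g ℓ z)) (Real.exp (g ℓ y) • Dg ℓ y) y :=
    fun ℓ y => (Real.hasDerivAt_exp (g ℓ y)).comp_hasFDerivAt y (hgdiff ℓ y)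
  have hexpneg : ∀ ℓ y, HasFDerivAt (fun z => Real.exp (-g ℓ z))
      (-(Real.exp (-g ℓ y) • Dg ℓ y)) y := by
    intro ℓ y
    have := (Real.hasDerivAt_exp (-g ℓ y)).comp_hasFDerivAt y (hgdiff ℓ y).neg
    simpa [Function.comp_def, smul_neg] using this
  have h1me : ∀ ℓ y, HasFDerivAt (fun z => 1 - Real.exp (g ℓ z))
      (-(Real.exp (g ℓ y) • Dg ℓ y)) y := by
    intro ℓ y
    simpa using (hexp ℓ y).const_sub 1
  have h1mene : ∀ ℓ y, HasFDerivAt (fun z => 1 - Real.exp (-g ℓ z))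
      (Real.exp (-g ℓ y) • Dg ℓ y) y := by
    intro ℓ y
    simpa [neg_neg] using (hexpneg ℓ y).const_sub 1
  -- step 1: HJE in terms of g
  have hHJE' : ∀ᶠ y in nhds q, ∑ ℓ,
      (Rp ℓ y * (1 - Real.exp (g ℓ y)) + Rm ℓ y * (1 - Real.exp (-g ℓ y))) = 0 := by
    simpa [hgdef] using hHJE
  -- step 2: derivative of HJE function
  have hGhas : ∀ y, HasFDerivAt
      (fun z => ∑ ℓ, (Rp ℓ z * (1 - Real.exp (g ℓ z)) + Rm ℓ z * (1 - Real.exp (-g ℓ z))))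
      (∑ ℓ, ((Rp ℓ y • (-(Real.exp (g ℓ y) • Dg ℓ y))
              + (1 - Real.exp (g ℓ y)) • fderiv ℝ (Rp ℓ) y)
           + (Rm ℓ y • (Real.exp (-g ℓ y) • Dg ℓ y)
              + (1 - Real.exp (-g ℓ y)) • fderiv ℝ (Rm ℓ) y))) y := by
    intro y
    exact HasFDerivAt.fun_sum fun ℓ _ =>
      ((((hRpC1 ℓ).differentiable one_ne_zero y).hasFDerivAt.fun_mul (h1me ℓ y)).fun_add
       ((((hRmC1 ℓ).differentiable one_ne_zero y).hasFDerivAt.fun_mul (h1mene ℓ y))))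
  -- step 3: derivative vanishes near q
  have hG'0 : ∀ᶠ y in nhds q,
      (∑ ℓ, ((Rp ℓ y • (-(Real.exp (g ℓ y) • Dg ℓ y))
              + (1 - Real.exp (g ℓ y)) • fderiv ℝ (Rp ℓ) y)
           + (Rm ℓ y • (Real.exp (-g ℓ y) • Dg ℓ y)
              + (1 - Real.exp (-g ℓ y)) • fderiv ℝ (Rm ℓ) y)))
        = (0 : (Fin N → ℝ) →L[ℝ] ℝ) := by
    filter_upwards [hHJE'.eventually_nhds] with y hy
    have h1 : fderiv ℝ
        (fun z => ∑ ℓ, (Rp ℓ z * (1 - Real.exp (g ℓ z)) + Rm ℓ z * (1 - Real.exp (-g ℓ z)))) y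
        = fderiv ℝ (fun _ => (0:ℝ)) y := Filter.EventuallyEq.fderiv_eq hy
    rw [fderiv_const_apply] at h1
    rw [← (hGhas y).fderiv, h1]
  -- step 4: scalar form of the vanishing derivative
  have hHf0 : ∀ j : Fin N, ∀ᶠ y in nhds q,
      (∑ ℓ, ((Rp ℓ y * (-Real.exp (g ℓ y) * Dg ℓ y (Pi.single j 1))
              + (1 - Real.exp (g ℓ y)) * fderiv ℝ (Rp ℓ) y (Pi.single j 1))
           + (Rm ℓ y * (Real.exp (-g ℓ y) * Dg ℓ y (Pi.single j 1))
              + (1 - Real.exp (-g ℓ y)) * fderiv ℝ (Rm ℓ) y (Pi.single j 1)))) = 0 := by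
    intro j
    filter_upwards [hG'0] with y hy
    have h2 := congrArg (fun (L : (Fin N → ℝ) →L[ℝ] ℝ) => L (Pi.single j 1)) hy
    simpa [ContinuousLinearMap.sum_apply, ContinuousLinearMap.add_apply,
      ContinuousLinearMap.smul_apply, ContinuousLinearMap.neg_apply, smul_eq_mul,
      mul_neg, neg_mul] using h2
  -- continuity and differentiability facts
  have hcontp : ∀ ℓ (j : Fin N), ContinuousAt (fun y => fderiv ℝ (Rp ℓ) y (Pi.single j 1)) q :=
    fun ℓ j => ((ContinuousLinearMap.apply ℝ ℝ ((Pi.single j 1 : Fin N → ℝ))).continuous.comp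
      ((hRpC1 ℓ).continuous_fderiv one_ne_zero)).continuousAt
  have hcontm : ∀ ℓ (j : Fin N), ContinuousAt (fun y => fderiv ℝ (Rm ℓ) y (Pi.single j 1)) q :=
    fun ℓ j => ((ContinuousLinearMap.apply ℝ ℝ ((Pi.single j 1 : Fin N → ℝ))).continuous.comp
      ((hRmC1 ℓ).continuous_fderiv one_ne_zero)).continuousAt
  have hwdiff : ∀ ℓ (j : Fin N), HasFDerivAt (fun y => Dg ℓ y (Pi.single j 1))
      (fderiv ℝ (fun y => Dg ℓ y (Pi.single j 1)) q) q := fun ℓ j =>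
    DifferentiableAt.hasFDerivAt (by
      exact ((ContinuousLinearMap.apply ℝ ℝ ((Pi.single j 1 : Fin N → ℝ))).contDiff.comp
        (hDgC1 ℓ)).differentiable one_ne_zero q)
  -- step 5: differentiate once more at q
  have key : ∀ j k : Fin N,
      ∑ ℓ, ((Rp ℓ q + Rm ℓ q) * (Dg ℓ q (Pi.single j 1) * Dg ℓ q (Pi.single k 1))
        + (fderiv ℝ (Rp ℓ) q (Pi.single j 1) - fderiv ℝ (Rm ℓ) q (Pi.single j 1))
            * Dg ℓ q (Pi.single k 1)
        + (fderiv ℝ (Rp ℓ) q (Pi.single k 1) - fderiv ℝ (Rm ℓ) q (Pi.single k 1))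
            * Dg ℓ q (Pi.single j 1)
        - (Rm ℓ q - Rp ℓ q) * fderiv ℝ (fun y => Dg ℓ y (Pi.single j 1)) q (Pi.single k 1)) = 0 := by
    intro j k
    have hKhas := HasFDerivAt.fun_sum (u := Finset.univ) (x := q) fun ℓ (_ : ℓ ∈ Finset.univ) =>
      (((((hRpC1 ℓ).differentiable one_ne_zero q).hasFDerivAt.fun_mul
            (((hexp ℓ q).fun_neg).fun_mul (hwdiff ℓ j))).fun_add
        (hasFDerivAt_mul_of_continuousAt (hcontp ℓ j) (h1me ℓ q) (by simp [hgq ℓ]))).fun_add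
       (((((hRmC1 ℓ).differentiable one_ne_zero q).hasFDerivAt.fun_mul
            ((hexpneg ℓ q).fun_mul (hwdiff ℓ j))).fun_add
        (hasFDerivAt_mul_of_continuousAt (hcontm ℓ j) (h1mene ℓ q) (by simp [hgq ℓ])))))
    have hfz := Filter.EventuallyEq.fderiv_eq (𝕜 := ℝ) (hHf0 j)
    rw [fderiv_const_apply] at hfz
    have hD := hKhas.fderiv
    rw [hfz] at hD
    have happ := congrArg (fun (L : (Fin N → ℝ) →L[ℝ] ℝ) => L (Pi.single k 1)) hD
    simp only [ContinuousLinearMap.sum_apply, ContinuousLinearMap.add_apply,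
      ContinuousLinearMap.smul_apply, ContinuousLinearMap.neg_apply,
      ContinuousLinearMap.zero_apply, Pi.zero_apply, smul_eq_mul,
      hgq, Real.exp_zero, neg_zero] at happ
    rw [← neg_eq_zero, ← Finset.sum_neg_distrib]
    conv_rhs => rw [happ]
    exact Finset.sum_congr rfl fun ℓ _ => by ring
  -- identification of Dg with second derivative of φ
  have hDgy : ∀ ℓ y, Dg ℓ y = (ContinuousLinearMap.apply ℝ ℝ (fun i => (ν ℓ i : ℝ))).comp
      (fderiv ℝ (fderiv ℝ φ) y) := by
    intro ℓ y
    have h1 : HasFDerivAt (g ℓ)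
        ((ContinuousLinearMap.apply ℝ ℝ (fun i => (ν ℓ i : ℝ))).comp
          (fderiv ℝ (fderiv ℝ φ) y)) y :=
      (ContinuousLinearMap.apply ℝ ℝ (fun i => (ν ℓ i : ℝ))).hasFDerivAt.comp y
        ((hf'C2.differentiable two_ne_zero y).hasFDerivAt)
    exact h1.fderiv
  have hΞentry : ∀ i j : Fin N, Ξ i j
      = fderiv ℝ (fderiv ℝ φ) q (Pi.single i 1) (Pi.single j 1) := by
    intro i j
    rw [hΞ i j, iteratedFDeriv_two_apply]
    simp
  have hΞsymm : ∀ i j : Fin N, Ξ i j = Ξ j i := by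
    intro i j
    rw [hΞentry i j, hΞentry j i]
    exact second_derivative_symmetric (fun y => (hφ1.differentiable one_ne_zero y).hasFDerivAt)
      ((hf'C2.differentiable two_ne_zero q).hasFDerivAt) _ _
  have hP : ∀ ℓ (j : Fin N), Dg ℓ q (Pi.single j 1) = ∑ i, (ν ℓ i : ℝ) * Ξ j i := by
    intro ℓ j
    rw [hDgy]
    simp only [ContinuousLinearMap.comp_apply, ContinuousLinearMap.apply_apply]
    rw [clm_apply_pi (fderiv ℝ (fderiv ℝ φ) q (Pi.single j 1)) (fun i => (ν ℓ i : ℝ))]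
    exact Finset.sum_congr rfl fun i _ => by rw [hΞentry j i]
  -- third-derivative term vanishes by stationarity
  have hT0 : ∀ j k : Fin N, ∑ ℓ, (Rm ℓ q - Rp ℓ q)
      * fderiv ℝ (fun y => Dg ℓ y (Pi.single j 1)) q (Pi.single k 1) = 0 := by
    intro j k
    have hTre : ∀ ℓ, fderiv ℝ (fun y => Dg ℓ y (Pi.single j 1)) q (Pi.single k 1)
        = (fderiv ℝ (fderiv ℝ (fderiv ℝ φ)) q (Pi.single k 1) (Pi.single j 1))
            (fun i => (ν ℓ i : ℝ)) := by
      intro ℓ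
      have hfun : (fun y => Dg ℓ y (Pi.single j 1))
          = fun y => (fderiv ℝ (fderiv ℝ φ) y (Pi.single j 1)) (fun i => (ν ℓ i : ℝ)) := by
        funext y; rw [hDgy ℓ y]; rfl
      rw [hfun]
      have ha : HasFDerivAt (fun y => fderiv ℝ (fderiv ℝ φ) y)
          (fderiv ℝ (fderiv ℝ (fderiv ℝ φ)) q) q :=
        (hf''C1.differentiable one_ne_zero q).hasFDerivAt
      have hb := ha.clm_apply (hasFDerivAt_const (Pi.single j 1 : Fin N → ℝ) q)
      have hc := hb.clm_apply (hasFDerivAt_const (fun i => (ν ℓ i : ℝ)) q)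
      rw [hc.fderiv]
      simp
    simp only [hTre]
    have hlin : ∀ ℓ : Fin M, (Rm ℓ q - Rp ℓ q)
        * (fderiv ℝ (fderiv ℝ (fderiv ℝ φ)) q (Pi.single k 1) (Pi.single j 1))
            (fun i => (ν ℓ i : ℝ))
        = (fderiv ℝ (fderiv ℝ (fderiv ℝ φ)) q (Pi.single k 1) (Pi.single j 1))
            ((Rm ℓ q - Rp ℓ q) • fun i => (ν ℓ i : ℝ)) := by
      intro ℓ; rw [ContinuousLinearMap.map_smul]; rfl
    rw [Finset.sum_congr rfl fun ℓ _ => hlin ℓ, ← map_sum]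
    have hzero : (∑ ℓ, (Rm ℓ q - Rp ℓ q) • fun i => (ν ℓ i : ℝ)) = (0 : Fin N → ℝ) := by
      funext i
      simp only [Finset.sum_apply, Pi.smul_apply, smul_eq_mul, Pi.zero_apply]
      have h5 : ∑ ℓ, (Rm ℓ q - Rp ℓ q) * (ν ℓ i : ℝ)
          = -∑ ℓ, (ν ℓ i : ℝ) * (Rp ℓ q - Rm ℓ q) := by
        rw [← Finset.sum_neg_distrib]
        exact Finset.sum_congr rfl fun ℓ _ => by ring
      rw [h5, hss i, neg_zero]
    rw [hzero, map_zero]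
  -- entries of B
  have hBval : ∀ (i k : Fin N), B i k = ∑ ℓ, (ν ℓ i : ℝ)
      * (fderiv ℝ (Rp ℓ) q (Pi.single k 1) - fderiv ℝ (Rm ℓ) q (Pi.single k 1)) := by
    intro i k
    rw [hB i k]
    have hhas : HasFDerivAt (fun y => ∑ ℓ, (ν ℓ i : ℝ) * (Rp ℓ y - Rm ℓ y))
        (∑ ℓ, (ν ℓ i : ℝ) • (fderiv ℝ (Rp ℓ) q - fderiv ℝ (Rm ℓ) q)) q :=
      HasFDerivAt.fun_sum fun ℓ _ => ((((hRpC1 ℓ).differentiable one_ne_zero q).hasFDerivAt.fun_sub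
        (((hRmC1 ℓ).differentiable one_ne_zero q).hasFDerivAt)).const_mul _)
    rw [hhas.fderiv]
    simp [ContinuousLinearMap.sum_apply, ContinuousLinearMap.smul_apply,
      ContinuousLinearMap.sub_apply, smul_eq_mul]
  -- the key identity in matrix-entry form
  have key2 : ∀ j k : Fin N,
      (∑ ℓ, (Rp ℓ q + Rm ℓ q) * ((∑ i, (ν ℓ i:ℝ) * Ξ j i) * (∑ i, (ν ℓ i:ℝ) * Ξ k i)))
      + (∑ ℓ, (fderiv ℝ (Rp ℓ) q (Pi.single j 1) - fderiv ℝ (Rm ℓ) q (Pi.single j 1))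
          * (∑ i, (ν ℓ i:ℝ) * Ξ k i))
      + (∑ ℓ, (fderiv ℝ (Rp ℓ) q (Pi.single k 1) - fderiv ℝ (Rm ℓ) q (Pi.single k 1))
          * (∑ i, (ν ℓ i:ℝ) * Ξ j i)) = 0 := by
    intro j k
    have h6 := key j k
    rw [Finset.sum_sub_distrib, hT0 j k, sub_zero] at h6
    simp only [hP] at h6
    rw [← Finset.sum_add_distrib, ← Finset.sum_add_distrib]
    exact h6
  -- matrix identities
  have hXAX : ∀ j k : Fin N, (Ξ * A * Ξ) j k
      = ∑ ℓ, (Rp ℓ q + Rm ℓ q) * ((∑ i, (ν ℓ i:ℝ) * Ξ j i) * (∑ i, (ν ℓ i:ℝ) * Ξ k i)) := by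
    intro j k
    simp only [Matrix.mul_apply, hA, Finset.sum_mul, Finset.mul_sum]
    rw [sum_reorder3]
    refine Finset.sum_congr rfl fun ℓ _ => ?_
    rw [Finset.sum_comm]
    exact Finset.sum_congr rfl fun i _ => Finset.sum_congr rfl fun i' _ => by
      rw [hΞsymm i k]; ring
  have hBTX : ∀ j k : Fin N, (Bᵀ * Ξ) j k
      = ∑ ℓ, (fderiv ℝ (Rp ℓ) q (Pi.single j 1) - fderiv ℝ (Rm ℓ) q (Pi.single j 1))
          * (∑ i, (ν ℓ i:ℝ) * Ξ k i) := by
    intro j k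
    simp only [Matrix.mul_apply, Matrix.transpose_apply, hBval, Finset.sum_mul, Finset.mul_sum]
    rw [Finset.sum_comm]
    exact Finset.sum_congr rfl fun ℓ _ => Finset.sum_congr rfl fun i _ => by
      rw [hΞsymm i k]; ring
  have hXB : ∀ j k : Fin N, (Ξ * B) j k
      = ∑ ℓ, (fderiv ℝ (Rp ℓ) q (Pi.single k 1) - fderiv ℝ (Rm ℓ) q (Pi.single k 1))
          * (∑ i, (ν ℓ i:ℝ) * Ξ j i) := by
    intro j k
    simp only [Matrix.mul_apply, hBval, Finset.sum_mul, Finset.mul_sum]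
    rw [Finset.sum_comm]
    exact Finset.sum_congr rfl fun ℓ _ => Finset.sum_congr rfl fun i _ => by ring
  have hmain : Ξ * A * Ξ = -(Bᵀ * Ξ + Ξ * B) := by
    ext j k
    rw [Matrix.neg_apply, Matrix.add_apply, hXAX j k, hBTX j k, hXB j k]
    have := key2 j k
    linarith
  -- conclude with invertibility
  have h1 : Ξ⁻¹ * Ξ = 1 := Matrix.nonsing_inv_mul Ξ hΞinv
  have h2 : Ξ * Ξ⁻¹ = 1 := Matrix.mul_nonsing_inv Ξ hΞinv
  have hAeq : A = Ξ⁻¹ * (Ξ * A * Ξ) * Ξ⁻¹ := by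
    rw [Matrix.mul_assoc Ξ A Ξ, ← Matrix.mul_assoc Ξ⁻¹ Ξ (A * Ξ), h1, Matrix.one_mul,
        Matrix.mul_assoc A Ξ Ξ⁻¹, h2, Matrix.mul_one]
  rw [hAeq, hmain]
  rw [Matrix.mul_neg, Matrix.neg_mul, Matrix.mul_add, Matrix.add_mul]
  congr 1
  have e1 : Ξ⁻¹ * (Bᵀ * Ξ) * Ξ⁻¹ = Ξ⁻¹ * Bᵀ := by
    rw [← Matrix.mul_assoc Ξ⁻¹ Bᵀ Ξ, Matrix.mul_assoc (Ξ⁻¹ * Bᵀ) Ξ Ξ⁻¹, h2, Matrix.mul_one]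
  have e2 : Ξ⁻¹ * (Ξ * B) * Ξ⁻¹ = B * Ξ⁻¹ := by
    rw [← Matrix.mul_assoc Ξ⁻¹ Ξ B, h1, Matrix.one_mul]
  rw [e1, e2, add_comm]
end

section
/- Let φ : (0,∞)^N → ℝ be differentiable and satisfy the Hamilton–Jacobi equation at x ∈ (0,∞)^N. Then the following three conditions are equivalent: (ii) the weak detailed balance condition holds at x, i.e. ln(R_{+ℓ}(x)/R_{−ℓ}(x)) = −ν_ℓ·∇φ(x) for all ℓ; (iii) q_hk[x] = 0, where q_hk[x] := Σ_{ℓ=1}^M (R_{−ℓ}(x) − R_{+ℓ}(x)) ln((R_{−ℓ}(x)/R_{+ℓ}(x)) exp(−ν_ℓ·∇φ(x))); (iv) f_d[x] = σ^tot[x], where f_d[x] := Σ_{ℓ=1}^M (R_{−ℓ}(x) − R_{+ℓ}(x)) (ν_ℓ·∇φ(x)) and σ^tot[x] := Σ_{ℓ=1}^M (R_{+ℓ}(x) − R_{−ℓ}(x)) ln(R_{+ℓ}(x)/R_{−ℓ}(x)), i.e. along any solution of the rate equation the time derivative of φ equals −σ^tot. -/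
open Real Filter Topology

private lemma sub_le_mul_log_div (x y : ℝ) (hx : 0 < x) (hy : 0 < y) :
    x - y ≤ x * Real.log (x / y) := by
  have h := Real.log_le_sub_one_of_pos (div_pos hy hx)
  have hlog : Real.log (x / y) = - Real.log (y / x) := by
    rw [Real.log_div hx.ne' hy.ne', Real.log_div hy.ne' hx.ne']; ring
  have hxy : x * (y / x) = y := by field_simp
  have := mul_le_mul_of_nonneg_left h hx.le
  rw [hlog]; nlinarith

private lemma sub_lt_mul_log_div (x y : ℝ) (hx : 0 < x) (hy : 0 < y) (hne : x ≠ y) :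
    x - y < x * Real.log (x / y) := by
  have hne' : y / x ≠ 1 := by
    intro h; exact hne (by field_simp at h; linarith)
  have h := Real.log_lt_sub_one_of_pos (div_pos hy hx) hne'
  have hlog : Real.log (x / y) = - Real.log (y / x) := by
    rw [Real.log_div hx.ne' hy.ne', Real.log_div hy.ne' hx.ne']; ring
  have hxy : x * (y / x) = y := by field_simp
  have := mul_lt_mul_of_pos_left h hx
  rw [hlog]; nlinarith

/-- The per-reaction inequality: `(s-1)(u-a) ≤ (su-a) log(u/a)`, equality iff `u = a`. -/
private lemma key_ineq (a s u : ℝ) (ha : 0 < a) (hs : 0 < s) (hu : 0 < u) :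
    (s - 1) * (u - a) ≤ (s * u - a) * Real.log (u / a) := by
  have h1 : u - a ≤ u * Real.log (u / a) := sub_le_mul_log_div u a hu ha
  have h2 : a - u ≤ a * Real.log (a / u) := sub_le_mul_log_div a u ha hu
  have hlog : Real.log (a / u) = - Real.log (u / a) := by
    rw [Real.log_div ha.ne' hu.ne', Real.log_div hu.ne' ha.ne']; ring
  rw [hlog] at h2
  nlinarith [mul_le_mul_of_nonneg_left h1 hs.le]

private lemma key_eq (a s u : ℝ) (ha : 0 < a) (hs : 0 < s) (hu : 0 < u)
    (heq : (s * u - a) * Real.log (u / a) = (s - 1) * (u - a)) : u = a := by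
  by_contra hne
  have h1 : u - a ≤ u * Real.log (u / a) := sub_le_mul_log_div u a hu ha
  have h2 : a - u < a * Real.log (a / u) := sub_lt_mul_log_div a u ha hu (Ne.symm hne)
  have hlog : Real.log (a / u) = - Real.log (u / a) := by
    rw [Real.log_div ha.ne' hu.ne', Real.log_div hu.ne' ha.ne']; ring
  rw [hlog] at h2
  nlinarith [mul_le_mul_of_nonneg_left h1 hs.le]

/-- Generalized form of the main theorem, abstracting the fluxes and gradient pairings. -/
private lemma main_aux (M : ℕ) (a b c : Fin M → ℝ)
    (ha : ∀ ℓ, 0 < a ℓ) (hb : ∀ ℓ, 0 < b ℓ)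
    (hHJE : ∑ ℓ, (a ℓ * (1 - Real.exp (c ℓ)) + b ℓ * (1 - Real.exp (-(c ℓ)))) = 0) :
    ((∀ ℓ, Real.log (a ℓ / b ℓ) = -(c ℓ)) ↔
      (∑ ℓ, (b ℓ - a ℓ) * Real.log (b ℓ / a ℓ * Real.exp (-(c ℓ))) = 0)) ∧
    ((∑ ℓ, (b ℓ - a ℓ) * Real.log (b ℓ / a ℓ * Real.exp (-(c ℓ))) = 0) ↔
      (∑ ℓ, (b ℓ - a ℓ) * c ℓ = ∑ ℓ, (a ℓ - b ℓ) * Real.log (a ℓ / b ℓ))) := by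
  -- notation
  have hee : ∀ ℓ, Real.exp (c ℓ) * Real.exp (-(c ℓ)) = 1 := by
    intro ℓ; rw [← Real.exp_add]; simp
  have hu : ∀ ℓ, 0 < b ℓ * Real.exp (-(c ℓ)) :=
    fun ℓ => mul_pos (hb ℓ) (Real.exp_pos _)
  -- log argument identity
  have hargs : ∀ ℓ, b ℓ / a ℓ * Real.exp (-(c ℓ)) = (b ℓ * Real.exp (-(c ℓ))) / a ℓ := by
    intro ℓ; rw [div_mul_eq_mul_div]
  -- F terms
  set F : Fin M → ℝ := fun ℓ =>
    (b ℓ - a ℓ) * Real.log (b ℓ / a ℓ * Real.exp (-(c ℓ))) -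
      (Real.exp (c ℓ) - 1) * (b ℓ * Real.exp (-(c ℓ)) - a ℓ) with hF
  have hFform : ∀ ℓ, F ℓ =
      (Real.exp (c ℓ) * (b ℓ * Real.exp (-(c ℓ))) - a ℓ) *
        Real.log ((b ℓ * Real.exp (-(c ℓ))) / a ℓ) -
      (Real.exp (c ℓ) - 1) * (b ℓ * Real.exp (-(c ℓ)) - a ℓ) := by
    intro ℓ
    rw [hF]
    simp only
    rw [hargs ℓ]
    have : Real.exp (c ℓ) * (b ℓ * Real.exp (-(c ℓ))) = b ℓ := by
      rw [mul_comm (b ℓ), ← mul_assoc, hee ℓ, one_mul]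
    rw [this]
  have hFnonneg : ∀ ℓ, 0 ≤ F ℓ := by
    intro ℓ
    rw [hFform ℓ]
    have := key_ineq (a ℓ) (Real.exp (c ℓ)) (b ℓ * Real.exp (-(c ℓ)))
      (ha ℓ) (Real.exp_pos _) (hu ℓ)
    linarith
  -- sum identity: q_hk = ∑ F  (using the HJE)
  have hsum : ∑ ℓ, (b ℓ - a ℓ) * Real.log (b ℓ / a ℓ * Real.exp (-(c ℓ))) = ∑ ℓ, F ℓ := by
    have hterm : ∀ ℓ ∈ (Finset.univ : Finset (Fin M)),
        (b ℓ - a ℓ) * Real.log (b ℓ / a ℓ * Real.exp (-(c ℓ))) =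
        F ℓ + (a ℓ * (1 - Real.exp (c ℓ)) + b ℓ * (1 - Real.exp (-(c ℓ)))) := by
      intro ℓ _
      rw [hF]
      simp only
      linear_combination (b ℓ) * hee ℓ
    rw [Finset.sum_congr rfl hterm, Finset.sum_add_distrib, hHJE, add_zero]
  constructor
  · constructor
    · -- (ii) → (iii)
      intro h
      apply Finset.sum_eq_zero
      intro ℓ _
      have hab : a ℓ / b ℓ = Real.exp (-(c ℓ)) := by
        rw [← h ℓ, Real.exp_log (div_pos (ha ℓ) (hb ℓ))]
      have : b ℓ / a ℓ * Real.exp (-(c ℓ)) = 1 := by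
        rw [← hab, div_mul_div_comm, mul_comm (b ℓ) (a ℓ)]
        exact div_self (mul_pos (ha ℓ) (hb ℓ)).ne'
      rw [this, Real.log_one, mul_zero]
    · -- (iii) → (ii)
      intro hq ℓ
      have hF0 : ∀ ℓ' ∈ (Finset.univ : Finset (Fin M)), F ℓ' = 0 := by
        rw [← Finset.sum_eq_zero_iff_of_nonneg (fun ℓ' _ => hFnonneg ℓ')]
        rw [← hsum, hq]
      have hFℓ := hF0 ℓ (Finset.mem_univ ℓ)
      rw [hFform ℓ] at hFℓ
      have hua : b ℓ * Real.exp (-(c ℓ)) = a ℓ :=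
        key_eq (a ℓ) (Real.exp (c ℓ)) (b ℓ * Real.exp (-(c ℓ)))
          (ha ℓ) (Real.exp_pos _) (hu ℓ) (by linarith)
      have hab : a ℓ / b ℓ = Real.exp (-(c ℓ)) := by
        rw [← hua, mul_comm, mul_div_assoc, div_self (hb ℓ).ne', mul_one]
      rw [hab, Real.log_exp]
  · -- (iii) ↔ (iv)
    have h34 : ∑ ℓ, (b ℓ - a ℓ) * Real.log (b ℓ / a ℓ * Real.exp (-(c ℓ))) =
        (∑ ℓ, (a ℓ - b ℓ) * Real.log (a ℓ / b ℓ)) - ∑ ℓ, (b ℓ - a ℓ) * c ℓ := by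
      rw [← Finset.sum_sub_distrib]
      apply Finset.sum_congr rfl
      intro ℓ _
      rw [Real.log_mul (div_pos (hb ℓ) (ha ℓ)).ne' (Real.exp_ne_zero _), Real.log_exp,
        Real.log_div (hb ℓ).ne' (ha ℓ).ne', Real.log_div (ha ℓ).ne' (hb ℓ).ne']
      ring
    rw [h34, sub_eq_zero, eq_comm]

/-- At a point where the Hamilton–Jacobi equation holds, the
following are equivalent: (ii) weak detailed balance condition at `x`;
(iii) vanishing of the housekeeping heat rate `q_hk[x]`; (iv) the free energy
dissipation rate equals the total entropy production rate,
`f_d[x] = σ^tot[x]`. -/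
theorem weak_detailed_balance_equivalences
    (N M : ℕ) (ν : Fin M → Fin N → ℤ)
    (Rp Rm : Fin M → (Fin N → ℝ) → ℝ)
    (hRp : ∀ ℓ (y : Fin N → ℝ), (∀ i, 0 < y i) → 0 < Rp ℓ y)
    (hRm : ∀ ℓ (y : Fin N → ℝ), (∀ i, 0 < y i) → 0 < Rm ℓ y)
    (x : Fin N → ℝ) (hx : ∀ i, 0 < x i)
    (φ : (Fin N → ℝ) → ℝ)
    (hφ : DifferentiableAt ℝ φ x)
    (hHJE : ∑ ℓ,
        (Rp ℓ x * (1 - Real.exp (fderiv ℝ φ x (fun i => (ν ℓ i : ℝ)))) +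
         Rm ℓ x * (1 - Real.exp (-(fderiv ℝ φ x (fun i => (ν ℓ i : ℝ)))))) = 0) :
    ((∀ ℓ, Real.log (Rp ℓ x / Rm ℓ x) = -(fderiv ℝ φ x (fun i => (ν ℓ i : ℝ)))) ↔
      (∑ ℓ, (Rm ℓ x - Rp ℓ x) *
        Real.log (Rm ℓ x / Rp ℓ x *
          Real.exp (-(fderiv ℝ φ x (fun i => (ν ℓ i : ℝ))))) = 0)) ∧
    ((∑ ℓ, (Rm ℓ x - Rp ℓ x) *
        Real.log (Rm ℓ x / Rp ℓ x *
          Real.exp (-(fderiv ℝ φ x (fun i => (ν ℓ i : ℝ))))) = 0) ↔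
      (∑ ℓ, (Rm ℓ x - Rp ℓ x) * fderiv ℝ φ x (fun i => (ν ℓ i : ℝ)) =
        ∑ ℓ, (Rp ℓ x - Rm ℓ x) * Real.log (Rp ℓ x / Rm ℓ x))) := by
  exact main_aux M (fun ℓ => Rp ℓ x) (fun ℓ => Rm ℓ x)
    (fun ℓ => fderiv ℝ φ x (fun i => (ν ℓ i : ℝ)))
    (fun ℓ => hRp ℓ x hx) (fun ℓ => hRm ℓ x hx) hHJE
end

section
/- Let x ∈ (0,∞)^N be a steady state of the rate equation (F_i(x) = 0 for all i), and let φ : (0,∞)^N → ℝ be differentiable, satisfy the Hamilton–Jacobi equation at x, and satisfy the weak detailed balance condition at x (ln(R_{+ℓ}(x)/R_{−ℓ}(x)) = −ν_ℓ·∇φ(x) for all ℓ). Then the strong detailed balance condition holds at x: R_{+ℓ}(x) = R_{−ℓ}(x) for every ℓ = 1,…,M. -/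
open Real Filter Topology

/-- At a steady state of the rate equation where the
Hamilton–Jacobi equation and the weak detailed balance condition hold, the
strong detailed balance condition `R₊ℓ(x) = R₋ℓ(x)` holds for every `ℓ`. -/
theorem steady_state_weak_db_implies_strong_db
    (N M : ℕ) (ν : Fin M → Fin N → ℤ)
    (Rp Rm : Fin M → (Fin N → ℝ) → ℝ)
    (hRp : ∀ ℓ (y : Fin N → ℝ), (∀ i, 0 < y i) → 0 < Rp ℓ y)
    (hRm : ∀ ℓ (y : Fin N → ℝ), (∀ i, 0 < y i) → 0 < Rm ℓ y)
    (x : Fin N → ℝ) (hx : ∀ i, 0 < x i)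
    (hss : ∀ i, ∑ ℓ, (ν ℓ i : ℝ) * (Rp ℓ x - Rm ℓ x) = 0)
    (φ : (Fin N → ℝ) → ℝ)
    (hφ : DifferentiableAt ℝ φ x)
    (hHJE : ∑ ℓ,
        (Rp ℓ x * (1 - Real.exp (fderiv ℝ φ x (fun i => (ν ℓ i : ℝ)))) +
         Rm ℓ x * (1 - Real.exp (-(fderiv ℝ φ x (fun i => (ν ℓ i : ℝ)))))) = 0)
    (hwdb : ∀ ℓ, Real.log (Rp ℓ x / Rm ℓ x) =
      -(fderiv ℝ φ x (fun i => (ν ℓ i : ℝ)))) :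
    ∀ ℓ, Rp ℓ x = Rm ℓ x := by
  set L := fderiv ℝ φ x with hL
  -- linearity: L applied to νℓ is a sum over coordinates
  have hlin : ∀ ℓ, L (fun i => (ν ℓ i : ℝ)) =
      ∑ i, (ν ℓ i : ℝ) * L (Pi.single i 1) := by
    intro ℓ
    have hv : (fun i => (ν ℓ i : ℝ)) = ∑ i, (ν ℓ i : ℝ) • (Pi.single i (1:ℝ) : Fin N → ℝ) := by
      funext j
      simp [Finset.sum_apply, Pi.single_apply]
    rw [hv, map_sum]
    simp [smul_eq_mul]
  -- weak detailed balance: θℓ = log Rm - log Rp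
  have hθ : ∀ ℓ, L (fun i => (ν ℓ i : ℝ)) = Real.log (Rm ℓ x) - Real.log (Rp ℓ x) := by
    intro ℓ
    have h := hwdb ℓ
    rw [Real.log_div (hRp ℓ x hx).ne' (hRm ℓ x hx).ne'] at h
    linarith
  -- key sum identity: ∑ℓ θℓ (Rp - Rm) = 0
  have hsum : ∑ ℓ, (Real.log (Rm ℓ x) - Real.log (Rp ℓ x)) * (Rp ℓ x - Rm ℓ x) = 0 := by
    have : ∑ ℓ, L (fun i => (ν ℓ i : ℝ)) * (Rp ℓ x - Rm ℓ x) = 0 := by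
      calc ∑ ℓ, L (fun i => (ν ℓ i : ℝ)) * (Rp ℓ x - Rm ℓ x)
          = ∑ ℓ, ∑ i, (ν ℓ i : ℝ) * L (Pi.single i 1) * (Rp ℓ x - Rm ℓ x) := by
            refine Finset.sum_congr rfl fun ℓ _ => ?_
            rw [hlin ℓ, Finset.sum_mul]
        _ = ∑ i, L (Pi.single i 1) * ∑ ℓ, (ν ℓ i : ℝ) * (Rp ℓ x - Rm ℓ x) := by
            rw [Finset.sum_comm]
            refine Finset.sum_congr rfl fun i _ => ?_
            rw [Finset.mul_sum]
            refine Finset.sum_congr rfl fun ℓ _ => by ring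
        _ = 0 := by simp [hss]
    calc ∑ ℓ, (Real.log (Rm ℓ x) - Real.log (Rp ℓ x)) * (Rp ℓ x - Rm ℓ x)
        = ∑ ℓ, L (fun i => (ν ℓ i : ℝ)) * (Rp ℓ x - Rm ℓ x) := by
          refine Finset.sum_congr rfl fun ℓ _ => by rw [hθ ℓ]
      _ = 0 := this
  -- each summand is nonpositive
  have hterm_nonneg : ∀ ℓ : Fin M,
      0 ≤ (Real.log (Rp ℓ x) - Real.log (Rm ℓ x)) * (Rp ℓ x - Rm ℓ x) := by
    intro ℓ
    rcases lt_trichotomy (Rp ℓ x) (Rm ℓ x) with h | h | h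
    · have hl : Real.log (Rp ℓ x) < Real.log (Rm ℓ x) :=
        Real.log_lt_log (hRp ℓ x hx) h
      nlinarith
    · simp [h]
    · have hl : Real.log (Rm ℓ x) < Real.log (Rp ℓ x) :=
        Real.log_lt_log (hRm ℓ x hx) h
      nlinarith
  have hsum' : ∑ ℓ, (Real.log (Rp ℓ x) - Real.log (Rm ℓ x)) * (Rp ℓ x - Rm ℓ x) = 0 := by
    have : ∑ ℓ, (Real.log (Rp ℓ x) - Real.log (Rm ℓ x)) * (Rp ℓ x - Rm ℓ x)
        = -∑ ℓ, (Real.log (Rm ℓ x) - Real.log (Rp ℓ x)) * (Rp ℓ x - Rm ℓ x) := by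
      rw [← Finset.sum_neg_distrib]
      exact Finset.sum_congr rfl fun ℓ _ => by ring
    rw [this, hsum, neg_zero]
  have hzero := (Finset.sum_eq_zero_iff_of_nonneg
    (fun ℓ _ => hterm_nonneg ℓ)).mp hsum'
  intro ℓ
  have h0 := hzero ℓ (Finset.mem_univ ℓ)
  rcases mul_eq_zero.mp h0 with h | h
  · have : Real.log (Rp ℓ x) = Real.log (Rm ℓ x) := by linarith
    exact Real.log_injOn_pos (Set.mem_Ioi.mpr (hRp ℓ x hx))
      (Set.mem_Ioi.mpr (hRm ℓ x hx)) this
  · linarith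
end

section
/- Assume the law of mass action: R_{+ℓ}(x) = k_{+ℓ} Π_{j=1}^N x_j^{ν⁺_{ℓj}} and R_{−ℓ}(x) = k_{−ℓ} Π_{j=1}^N x_j^{ν⁻_{ℓj}} with k_{±ℓ} > 0. Fix x^ss ∈ (0,∞)^N and define A(x) := Σ_{j=1}^N [ x_j ln(x_j/x_j^ss) − x_j + x_j^ss ] on (0,∞)^N. Then for every x ∈ (0,∞)^N: Σ_{ℓ=1}^M R_{+ℓ}(x)[1 − exp(ν_ℓ·∇A(x))] + R_{−ℓ}(x)[1 − exp(−ν_ℓ·∇A(x))] = Σ_{ℓ=1}^M (R_{+ℓ}(x^ss) − R_{−ℓ}(x^ss)) · [ Π_{j=1}^N (x_j/x_j^ss)^{ν⁺_{ℓj}} − Π_{j=1}^N (x_j/x_j^ss)^{ν⁻_{ℓj}} ]. -/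
open Real Filter Topology

theorem aux_hasFDerivAt_A
    (N : ℕ) (xss : Fin N → ℝ) (hxss : ∀ i, 0 < xss i)
    (A : (Fin N → ℝ) → ℝ)
    (hA : ∀ y : Fin N → ℝ, A y = ∑ j, (y j * Real.log (y j / xss j) - y j + xss j))
    (x : Fin N → ℝ) (hx : ∀ i, 0 < x i) :
    HasFDerivAt A (∑ j, Real.log (x j / xss j) •
      (ContinuousLinearMap.proj j : (Fin N → ℝ) →L[ℝ] ℝ)) x := by
  have : A = fun y : Fin N → ℝ => ∑ j, (y j * Real.log (y j / xss j) - y j + xss j) := by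
    funext y; exact hA y
  rw [this]
  apply HasFDerivAt.fun_sum
  intro j _
  have hxj : x j ≠ 0 := (hx j).ne'
  have hcj : xss j ≠ 0 := (hxss j).ne'
  -- derivative of t ↦ t * log (t / c) - t + c at x j is log (x j / c)
  have hlog : HasDerivAt (fun t : ℝ => Real.log (t / xss j)) (1 / x j) (x j) := by
    have h1 : HasDerivAt (fun t : ℝ => t / xss j) (1 / xss j) (x j) :=
      (hasDerivAt_id (x j)).div_const _
    have h2 : HasDerivAt Real.log (1 / (x j / xss j)) (x j / xss j) := by
      simpa [Real.deriv_log] using Real.hasDerivAt_log (div_ne_zero hxj hcj)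
    have := h2.comp (x j) h1
    refine this.congr_deriv ?_
    field_simp
  have hmul : HasDerivAt (fun t : ℝ => t * Real.log (t / xss j))
      (Real.log (x j / xss j) + 1) (x j) := by
    have := (hasDerivAt_id (x j)).mul hlog
    refine this.congr_deriv ?_
    simp only [id]
    field_simp
  have hfull : HasDerivAt (fun t : ℝ => t * Real.log (t / xss j) - t + xss j)
      (Real.log (x j / xss j)) (x j) := by
    have := (hmul.sub (hasDerivAt_id (x j))).add_const (xss j)
    refine this.congr_deriv ?_
    ring
  exact hfull.comp_hasFDerivAt x (hasFDerivAt_apply (𝕜 := ℝ) j x)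

theorem mass_action_hje_complex_balance_identity
    (N M : ℕ) (νp νm : Fin M → Fin N → ℕ)
    (kp km : Fin M → ℝ)
    (hkp : ∀ ℓ, 0 < kp ℓ) (hkm : ∀ ℓ, 0 < km ℓ)
    (Rp Rm : Fin M → (Fin N → ℝ) → ℝ)
    (hRp : ∀ ℓ (y : Fin N → ℝ), Rp ℓ y = kp ℓ * ∏ j, y j ^ νp ℓ j)
    (hRm : ∀ ℓ (y : Fin N → ℝ), Rm ℓ y = km ℓ * ∏ j, y j ^ νm ℓ j)
    (xss : Fin N → ℝ) (hxss : ∀ i, 0 < xss i)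
    (A : (Fin N → ℝ) → ℝ)
    (hA : ∀ y : Fin N → ℝ, A y = ∑ j, (y j * Real.log (y j / xss j) - y j + xss j))
    (x : Fin N → ℝ) (hx : ∀ i, 0 < x i) :
    ∑ ℓ, (Rp ℓ x * (1 - Real.exp (fderiv ℝ A x
            (fun j => (νm ℓ j : ℝ) - (νp ℓ j : ℝ)))) +
          Rm ℓ x * (1 - Real.exp (-(fderiv ℝ A x
            (fun j => (νm ℓ j : ℝ) - (νp ℓ j : ℝ)))))) =
      ∑ ℓ, (Rp ℓ xss - Rm ℓ xss) *
        ((∏ j, (x j / xss j) ^ νp ℓ j) - ∏ j, (x j / xss j) ^ νm ℓ j) := by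
  have hD := aux_hasFDerivAt_A N xss hxss A hA x hx
  have hfd := hD.fderiv
  set r : Fin N → ℝ := fun j => x j / xss j with hr
  have hrpos : ∀ j, 0 < r j := fun j => div_pos (hx j) (hxss j)
  -- value of the derivative on any vector
  have happ : ∀ v : Fin N → ℝ, fderiv ℝ A x v = ∑ j, v j * Real.log (r j) := by
    intro v
    rw [hfd]
    simp [ContinuousLinearMap.sum_apply, mul_comm]
    rfl
  apply Finset.sum_congr rfl
  intro ℓ _
  set Pp : ℝ := ∏ j, r j ^ νp ℓ j with hPp
  set Pm : ℝ := ∏ j, r j ^ νm ℓ j with hPm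
  have hPppos : 0 < Pp := Finset.prod_pos fun j _ => pow_pos (hrpos j) _
  have hPmpos : 0 < Pm := Finset.prod_pos fun j _ => pow_pos (hrpos j) _
  -- exp of the directional derivative
  have hexp : Real.exp (fderiv ℝ A x (fun j => (νm ℓ j : ℝ) - (νp ℓ j : ℝ))) = Pm / Pp := by
    rw [happ]
    have : ∑ j, ((νm ℓ j : ℝ) - (νp ℓ j : ℝ)) * Real.log (r j)
        = (∑ j, (νm ℓ j : ℝ) * Real.log (r j)) - ∑ j, (νp ℓ j : ℝ) * Real.log (r j) := by
      rw [← Finset.sum_sub_distrib]; apply Finset.sum_congr rfl; intros; ring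
    rw [this, Real.exp_sub]
    congr 1 <;>
    · rw [Real.exp_sum]
      apply Finset.prod_congr rfl
      intro j _
      rw [Real.exp_nat_mul, Real.exp_log (hrpos j)]
  have hexpneg : Real.exp (-(fderiv ℝ A x (fun j => (νm ℓ j : ℝ) - (νp ℓ j : ℝ)))) = Pp / Pm := by
    rw [Real.exp_neg, hexp, inv_div]
  -- mass action factorization
  have hxfac : ∀ (ν : Fin N → ℕ), ∏ j, x j ^ ν j = (∏ j, xss j ^ ν j) * ∏ j, r j ^ ν j := by
    intro ν
    rw [← Finset.prod_mul_distrib]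
    apply Finset.prod_congr rfl
    intro j _
    rw [← mul_pow]
    congr 1
    rw [hr]
    show x j = xss j * (x j / xss j)
    rw [mul_comm, div_mul_cancel₀ _ (hxss j).ne']
  have hRpx : Rp ℓ x = Rp ℓ xss * Pp := by
    rw [hRp, hRp, hxfac (νp ℓ), hPp]; ring
  have hRmx : Rm ℓ x = Rm ℓ xss * Pm := by
    rw [hRm, hRm, hxfac (νm ℓ), hPm]; ring
  rw [hexp, hexpneg, hRpx, hRmx]
  have hPp' : Pp ≠ 0 := hPppos.ne'
  have hPm' : Pm ≠ 0 := hPmpos.ne'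
  field_simp
  ring
end

section
/- Assume the law of mass action: R_{+ℓ}(x) = k_{+ℓ} Π_{j=1}^N x_j^{ν⁺_{ℓj}}, R_{−ℓ}(x) = k_{−ℓ} Π_{j=1}^N x_j^{ν⁻_{ℓj}} with k_{±ℓ} > 0, and let x^ss ∈ (0,∞)^N be complex balanced, meaning Σ_{ℓ=1}^M (R_{+ℓ}(x^ss) − R_{−ℓ}(x^ss)) [ Π_{j=1}^N (x_j/x_j^ss)^{ν⁺_{ℓj}} − Π_{j=1}^N (x_j/x_j^ss)^{ν⁻_{ℓj}} ] = 0 for every x ∈ (0,∞)^N. Then the function A(x) := Σ_{j=1}^N [ x_j ln(x_j/x_j^ss) − x_j + x_j^ss ] satisfies the Hamilton–Jacobi equation at every x ∈ (0,∞)^N: Σ_{ℓ=1}^M R_{+ℓ}(x)[1 − exp(ν_ℓ·∇A(x))] + R_{−ℓ}(x)[1 − exp(−ν_ℓ·∇A(x))] = 0. Moreover A is convex on (0,∞)^N, and along any solution x(t) of the rate equation dx_i/dt = Σ_ℓ ν_{ℓi}(R_{+ℓ}(x) − R_{−ℓ}(x)) in the positive orthant one has (d/dt) A(x(t)) ≤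 0. -/
open Real Filter Topology

lemma entropy_hasFDerivAt (N : ℕ) (c : Fin N → ℝ) (hc : ∀ i, 0 < c i)
    (x : Fin N → ℝ) (hx : ∀ i, 0 < x i) :
    HasFDerivAt (fun y : Fin N → ℝ => ∑ j, (y j * Real.log (y j / c j) - y j + c j))
      (∑ j, Real.log (x j / c j) • (ContinuousLinearMap.proj j : (Fin N → ℝ) →L[ℝ] ℝ)) x := by
  apply HasFDerivAt.fun_sum
  intro j _
  have hxj := hx j; have hcj := hc j
  have h1 : HasDerivAt (fun u : ℝ => u / c j) (1 / c j) (x j) :=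
    (hasDerivAt_id _).div_const _
  have h2 : HasDerivAt (fun u : ℝ => Real.log (u / c j)) ((x j / c j)⁻¹ * (1 / c j)) (x j) :=
    (Real.hasDerivAt_log (by positivity)).comp _ h1
  have h3 : HasDerivAt (fun u : ℝ => u * Real.log (u / c j))
      (1 * Real.log (x j / c j) + x j * ((x j / c j)⁻¹ * (1 / c j))) (x j) :=
    (hasDerivAt_id _).mul h2
  have h4 : HasDerivAt (fun u : ℝ => u * Real.log (u / c j) - u + c j)
      (Real.log (x j / c j)) (x j) := by
    have h5 := (h3.sub (hasDerivAt_id _)).add_const (c j)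
    refine h5.congr_deriv ?_
    field_simp
    ring
  exact h4.comp_hasFDerivAt x ((ContinuousLinearMap.proj j : (Fin N → ℝ) →L[ℝ] ℝ).hasFDerivAt)

lemma entropy_fderiv_apply (N : ℕ) (c : Fin N → ℝ) (hc : ∀ i, 0 < c i)
    (x : Fin N → ℝ) (hx : ∀ i, 0 < x i) (v : Fin N → ℝ) :
    (∑ j, Real.log (x j / c j) • (ContinuousLinearMap.proj j : (Fin N → ℝ) →L[ℝ] ℝ)) v
      = ∑ j, Real.log (x j / c j) * v j := by
  simp [ContinuousLinearMap.sum_apply]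

lemma scalar_convex_ineq (c : ℝ) (hc : 0 < c) {u v a b : ℝ} (hu : 0 ≤ u) (hv : 0 ≤ v)
    (ha : 0 ≤ a) (hb : 0 ≤ b) (hab : a + b = 1) :
    (a*u + b*v) * Real.log ((a*u + b*v) / c) - (a*u + b*v) + c
      ≤ a * (u * Real.log (u / c) - u + c) + b * (v * Real.log (v / c) - v + c) := by
  have key : ∀ t : ℝ, 0 ≤ t → t * Real.log (t / c) = t * Real.log t - t * Real.log c := by
    intro t ht
    rcases eq_or_lt_of_le ht with h | h
    · simp [← h]
    · rw [Real.log_div h.ne' hc.ne']; ring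
  have hw : 0 ≤ a*u + b*v := by positivity
  have conv := Real.convexOn_mul_log.2 hu hv ha hb hab
  simp only [smul_eq_mul] at conv
  rw [key _ hw, key _ hu, key _ hv]
  nlinarith [conv]

lemma term_bound {Rp Rm a b : ℝ} (hRp : 0 < Rp) (hRm : 0 < Rm) (ha : 0 < a) (hb : 0 < b) :
    (Rp * a - Rm * b) * (Real.log b - Real.log a) ≤ Rp * (b - a) + Rm * (a - b) := by
  have h1 : Real.log b - Real.log a ≤ b/a - 1 := by
    rw [← Real.log_div hb.ne' ha.ne']; exact Real.log_le_sub_one_of_pos (by positivity)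
  have h2 : Real.log a - Real.log b ≤ a/b - 1 := by
    rw [← Real.log_div ha.ne' hb.ne']; exact Real.log_le_sub_one_of_pos (by positivity)
  have e1 : Rp * a * (Real.log b - Real.log a) ≤ Rp * (b - a) := by
    have := mul_le_mul_of_nonneg_left h1 (le_of_lt (mul_pos hRp ha))
    have heq : Rp * a * (b/a - 1) = Rp * (b - a) := by field_simp
    linarith [heq ▸ this]
  have e2 : Rm * b * (Real.log a - Real.log b) ≤ Rm * (a - b) := by
    have := mul_le_mul_of_nonneg_left h2 (le_of_lt (mul_pos hRm hb))
    have heq : Rm * b * (a/b - 1) = Rm * (a - b) := by field_simp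
    linarith [heq ▸ this]
  nlinarith [e1, e2]

/-- For mass-action kinetics with a complex-balanced steady state
`x^ss`, the function `A(x) = ∑_j [x_j ln(x_j/x_j^ss) - x_j + x_j^ss]` satisfies
the Hamilton–Jacobi equation at every positive `x`, is convex on the positive
orthant, and is non-increasing along every positive solution of the rate
equation. -/
theorem complex_balance_A_is_hje_solution_convex_lyapunov
    (N M : ℕ) (νp νm : Fin M → Fin N → ℕ)
    (kp km : Fin M → ℝ)
    (hkp : ∀ ℓ, 0 < kp ℓ) (hkm : ∀ ℓ, 0 < km ℓ)
    (Rp Rm : Fin M → (Fin N → ℝ) → ℝ)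
    (hRp : ∀ ℓ (y : Fin N → ℝ), Rp ℓ y = kp ℓ * ∏ j, y j ^ νp ℓ j)
    (hRm : ∀ ℓ (y : Fin N → ℝ), Rm ℓ y = km ℓ * ∏ j, y j ^ νm ℓ j)
    (xss : Fin N → ℝ) (hxss : ∀ i, 0 < xss i)
    (hcb : ∀ (x : Fin N → ℝ), (∀ i, 0 < x i) →
      ∑ ℓ, (Rp ℓ xss - Rm ℓ xss) *
        ((∏ j, (x j / xss j) ^ νp ℓ j) - ∏ j, (x j / xss j) ^ νm ℓ j) = 0)
    (A : (Fin N → ℝ) → ℝ)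
    (hA : ∀ y : Fin N → ℝ, A y = ∑ j, (y j * Real.log (y j / xss j) - y j + xss j)) :
    (∀ (x : Fin N → ℝ), (∀ i, 0 < x i) →
      ∑ ℓ, (Rp ℓ x * (1 - Real.exp (fderiv ℝ A x
              (fun j => (νm ℓ j : ℝ) - (νp ℓ j : ℝ)))) +
            Rm ℓ x * (1 - Real.exp (-(fderiv ℝ A x
              (fun j => (νm ℓ j : ℝ) - (νp ℓ j : ℝ)))))) = 0) ∧
    ConvexOn ℝ {y : Fin N → ℝ | ∀ i, 0 < y i} A ∧
    (∀ (x : ℝ → (Fin N → ℝ)), (∀ t i, 0 < x t i) →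
      (∀ t, HasDerivAt x
        (fun i => ∑ ℓ, ((νm ℓ i : ℝ) - (νp ℓ i : ℝ)) * (Rp ℓ (x t) - Rm ℓ (x t))) t) →
      ∀ t, deriv (fun s => A (x s)) t ≤ 0) := by
  have hAeq : A = fun y : Fin N → ℝ => ∑ j, (y j * Real.log (y j / xss j) - y j + xss j) :=
    funext hA
  subst hAeq
  -- fderiv computation
  have hfd : ∀ (x : Fin N → ℝ), (∀ i, 0 < x i) → ∀ v : Fin N → ℝ,
      fderiv ℝ (fun y : Fin N → ℝ => ∑ j, (y j * Real.log (y j / xss j) - y j + xss j)) x v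
        = ∑ j, Real.log (x j / xss j) * v j := by
    intro x hx v
    rw [(entropy_hasFDerivAt N xss hxss x hx).fderiv]
    exact entropy_fderiv_apply N xss hxss x hx v
  -- positivity of steady state rates
  have hRpss : ∀ ℓ, 0 < Rp ℓ xss := by
    intro ℓ; rw [hRp]
    exact mul_pos (hkp ℓ) (Finset.prod_pos fun j _ => pow_pos (hxss j) _)
  have hRmss : ∀ ℓ, 0 < Rm ℓ xss := by
    intro ℓ; rw [hRm]
    exact mul_pos (hkm ℓ) (Finset.prod_pos fun j _ => pow_pos (hxss j) _)
  -- key product identities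
  have hprod : ∀ (x : Fin N → ℝ), (∀ i, 0 < x i) → ∀ (ν : Fin N → ℕ),
      ∏ j, x j ^ ν j = (∏ j, xss j ^ ν j) * ∏ j, (x j / xss j) ^ ν j := by
    intro x hx ν
    rw [← Finset.prod_mul_distrib]
    refine Finset.prod_congr rfl fun j _ => ?_
    rw [← mul_pow]
    congr 1
    rw [mul_comm, div_mul_cancel₀ _ (hxss j).ne']
  have hRpx : ∀ (x : Fin N → ℝ), (∀ i, 0 < x i) → ∀ ℓ,
      Rp ℓ x = Rp ℓ xss * ∏ j, (x j / xss j) ^ νp ℓ j := by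
    intro x hx ℓ; rw [hRp, hRp, hprod x hx, mul_assoc]
  have hRmx : ∀ (x : Fin N → ℝ), (∀ i, 0 < x i) → ∀ ℓ,
      Rm ℓ x = Rm ℓ xss * ∏ j, (x j / xss j) ^ νm ℓ j := by
    intro x hx ℓ; rw [hRm, hRm, hprod x hx, mul_assoc]
  -- log of the products
  have hlog : ∀ (x : Fin N → ℝ), (∀ i, 0 < x i) → ∀ (ν : Fin N → ℕ),
      Real.log (∏ j, (x j / xss j) ^ ν j) = ∑ j, (ν j : ℝ) * Real.log (x j / xss j) := by
    intro x hx ν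
    rw [Real.log_prod (fun j _ => pow_ne_zero _ (div_pos (hx j) (hxss j)).ne')]
    exact Finset.sum_congr rfl fun j _ => Real.log_pow _ _
  have hDl : ∀ (x : Fin N → ℝ), (∀ i, 0 < x i) → ∀ ℓ,
      fderiv ℝ (fun y : Fin N → ℝ => ∑ j, (y j * Real.log (y j / xss j) - y j + xss j)) x
          (fun j => (νm ℓ j : ℝ) - (νp ℓ j : ℝ))
        = Real.log (∏ j, (x j / xss j) ^ νm ℓ j) - Real.log (∏ j, (x j / xss j) ^ νp ℓ j) := by
    intro x hx ℓ
    rw [hfd x hx, hlog x hx, hlog x hx, ← Finset.sum_sub_distrib]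
    exact Finset.sum_congr rfl fun j _ => by ring
  refine ⟨?_, ?_, ?_⟩
  · -- Hamilton–Jacobi equation
    intro x hx
    have := hcb x hx
    rw [← this]
    refine Finset.sum_congr rfl fun ℓ _ => ?_
    rw [hDl x hx ℓ, hRpx x hx ℓ, hRmx x hx ℓ]
    generalize hP : (∏ j, (x j / xss j) ^ νp ℓ j) = P at *
    generalize hQ : (∏ j, (x j / xss j) ^ νm ℓ j) = Q at *
    have ha : (0:ℝ) < P := hP ▸ Finset.prod_pos fun j _ => pow_pos (div_pos (hx j) (hxss j)) _
    have hb : (0:ℝ) < Q := hQ ▸ Finset.prod_pos fun j _ => pow_pos (div_pos (hx j) (hxss j)) _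
    rw [← Real.log_div hb.ne' ha.ne', Real.exp_neg, Real.exp_log (div_pos hb ha), inv_div]
    field_simp
    ring
  · -- convexity
    constructor
    · have : {y : Fin N → ℝ | ∀ i, 0 < y i} = Set.univ.pi fun _ => Set.Ioi (0:ℝ) := by
        ext y; simp [Set.mem_pi]
      rw [this]
      exact convex_pi fun i _ => convex_Ioi 0
    · intro u hu v hv a b ha hb hab
      simp only [smul_eq_mul, Pi.add_apply, Pi.smul_apply, smul_eq_mul]
      rw [Finset.mul_sum, Finset.mul_sum, ← Finset.sum_add_distrib]
      refine Finset.sum_le_sum fun j _ => ?_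
      exact scalar_convex_ineq (xss j) (hxss j) (hu j).le (hv j).le ha hb hab
  · -- Lyapunov property
    intro x hx hx' t
    have hF := entropy_hasFDerivAt N xss hxss (x t) (hx t)
    have hchain : HasDerivAt
        (fun s => (fun y : Fin N → ℝ => ∑ j, (y j * Real.log (y j / xss j) - y j + xss j)) (x s))
        ((∑ j, Real.log (x t j / xss j) • (ContinuousLinearMap.proj j : (Fin N → ℝ) →L[ℝ] ℝ))
          (fun i => ∑ ℓ, ((νm ℓ i : ℝ) - (νp ℓ i : ℝ)) * (Rp ℓ (x t) - Rm ℓ (x t)))) t :=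
      hF.comp_hasDerivAt t (hx' t)
    rw [hchain.deriv]
    rw [entropy_fderiv_apply N xss hxss (x t) (hx t)]
    -- swap the sums
    have hswap : ∑ j, Real.log (x t j / xss j) *
          (∑ ℓ, ((νm ℓ j : ℝ) - (νp ℓ j : ℝ)) * (Rp ℓ (x t) - Rm ℓ (x t)))
        = ∑ ℓ, (Rp ℓ (x t) - Rm ℓ (x t)) *
            (Real.log (∏ j, (x t j / xss j) ^ νm ℓ j)
              - Real.log (∏ j, (x t j / xss j) ^ νp ℓ j)) := by
      simp only [Finset.mul_sum]
      rw [Finset.sum_comm]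
      refine Finset.sum_congr rfl fun ℓ _ => ?_
      rw [hlog (x t) (hx t), hlog (x t) (hx t), ← Finset.sum_sub_distrib, Finset.mul_sum]
      exact Finset.sum_congr rfl fun j _ => by ring
    rw [hswap]
    have hzero : ∑ ℓ, (Rp ℓ xss - Rm ℓ xss) *
        ((∏ j, (x t j / xss j) ^ νm ℓ j) - ∏ j, (x t j / xss j) ^ νp ℓ j) = 0 := by
      have := hcb (x t) (hx t)
      have h2 : ∀ ℓ : Fin M, (Rp ℓ xss - Rm ℓ xss) *
          ((∏ j, (x t j / xss j) ^ νm ℓ j) - ∏ j, (x t j / xss j) ^ νp ℓ j)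
          = -((Rp ℓ xss - Rm ℓ xss) *
            ((∏ j, (x t j / xss j) ^ νp ℓ j) - ∏ j, (x t j / xss j) ^ νm ℓ j)) := fun ℓ => by ring
      simp only [h2, Finset.sum_neg_distrib, this, neg_zero]
    calc ∑ ℓ, (Rp ℓ (x t) - Rm ℓ (x t)) *
            (Real.log (∏ j, (x t j / xss j) ^ νm ℓ j)
              - Real.log (∏ j, (x t j / xss j) ^ νp ℓ j))
        ≤ ∑ ℓ, (Rp ℓ xss * ((∏ j, (x t j / xss j) ^ νm ℓ j) - ∏ j, (x t j / xss j) ^ νp ℓ j)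
            + Rm ℓ xss * ((∏ j, (x t j / xss j) ^ νp ℓ j) - ∏ j, (x t j / xss j) ^ νm ℓ j)) := by
          refine Finset.sum_le_sum fun ℓ _ => ?_
          have ha : (0:ℝ) < ∏ j, (x t j / xss j) ^ νp ℓ j :=
            Finset.prod_pos fun j _ => pow_pos (div_pos (hx t j) (hxss j)) _
          have hb : (0:ℝ) < ∏ j, (x t j / xss j) ^ νm ℓ j :=
            Finset.prod_pos fun j _ => pow_pos (div_pos (hx t j) (hxss j)) _
          rw [hRpx (x t) (hx t) ℓ, hRmx (x t) (hx t) ℓ]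
          exact term_bound (hRpss ℓ) (hRmss ℓ) ha hb
      _ = ∑ ℓ, (Rp ℓ xss - Rm ℓ xss) *
            ((∏ j, (x t j / xss j) ^ νm ℓ j) - ∏ j, (x t j / xss j) ^ νp ℓ j) := by
          exact Finset.sum_congr rfl fun ℓ _ => by ring
      _ = 0 := hzero
end
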